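/- arXiv:2202.00392 — 8 statements merged into one kernel-verified Lean document; each statement's English description precedes it below -/
import Mathlib

section
/- Let τ ≥ 2 be an integer and let (D, w) be a weighted digraph on a finite nonempty vertex type V such that every dicut has weight at least τ and ∑_{v ∈ V} ((wdeg⁺(v) − wdeg⁻(v)) mod τ) ≤ τ (i.e. ρ(τ,D,w) ≤ 1). Then there exists an equitable w-weighted packing of dijoins of size τ. -/
open Finset

variable {V : Type*} [Fintype V] [DecidableEq V]

/-- `U` is the shore of a dicut of the digraph `D`: it is a nonempty proper
vertex subset with no arc of `D` entering it. -/
def IsDicutShore (D : V → V → Prop) (U : Finset V) : Prop :=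
  U.Nonempty ∧ U ≠ Finset.univ ∧ ∀ v ∉ U, ∀ u ∈ U, ¬ D v u

/-- The weight of the dicut `δ⁺(U)` with respect to the weights `w`. -/
def cutWeight (w : V → V → ℕ) (U : Finset V) : ℕ :=
  ∑ u ∈ U, ∑ v ∈ Uᶜ, w u v

/-- The set of arcs of the dicut `δ⁺(U)`. -/
def dicutArcSet (D : V → V → Prop) (U : Finset V) : Set (V × V) :=
  {p : V × V | p.1 ∈ U ∧ p.2 ∉ U ∧ D p.1 p.2}

/-- `U` is the shore of an (inclusionwise) minimal dicut of `D`. -/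
def IsMinimalDicutShore (D : V → V → Prop) (U : Finset V) : Prop :=
  IsDicutShore D U ∧
    ¬ ∃ W : Finset V, IsDicutShore D W ∧ dicutArcSet D W ⊂ dicutArcSet D U



def cutZ (w : V → V → ℕ) (S : Finset V) : ℤ := ∑ u ∈ S, ∑ v ∈ Sᶜ, (w u v : ℤ)

def wdiv (J : V → V → ℕ) (u : V) : ℤ := (∑ v, (J u v : ℤ)) - ∑ v, (J v u : ℤ)

lemma cutZ_nonneg (w : V → V → ℕ) (S : Finset V) : 0 ≤ cutZ w S := by
  apply Finset.sum_nonneg; intro u _; apply Finset.sum_nonneg; intro v _; positivity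

lemma cutZ_eq_ite (w : V → V → ℕ) (S : Finset V) :
    cutZ w S = ∑ u, ∑ v, (if u ∈ S ∧ v ∉ S then (w u v : ℤ) else 0) := by
  have key : ∀ (f : V → ℤ) (T : Finset V), ∑ x ∈ T, f x = ∑ x, if x ∈ T then f x else 0 := by
    intro f T
    rw [Finset.sum_ite_mem, Finset.univ_inter]
  rw [cutZ, key _ S]
  refine Finset.sum_congr rfl fun u _ => ?_
  by_cases hu : u ∈ S
  · simp only [hu, if_true, true_and]
    rw [key _ Sᶜ]
    refine Finset.sum_congr rfl fun v _ => ?_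
    simp [Finset.mem_compl]
  · simp [hu]

lemma cutZ_submodular (w : V → V → ℕ) (A B : Finset V) :
    cutZ w (A ∪ B) + cutZ w (A ∩ B) ≤ cutZ w A + cutZ w B := by
  rw [cutZ_eq_ite, cutZ_eq_ite, cutZ_eq_ite, cutZ_eq_ite,
    ← Finset.sum_add_distrib, ← Finset.sum_add_distrib]
  refine Finset.sum_le_sum fun u _ => ?_
  rw [← Finset.sum_add_distrib, ← Finset.sum_add_distrib]
  refine Finset.sum_le_sum fun v _ => ?_
  by_cases hua : u ∈ A <;> by_cases hub : u ∈ B <;> by_cases hva : v ∈ A <;>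
    by_cases hvb : v ∈ B <;>
    simp [Finset.mem_union, Finset.mem_inter, hua, hub, hva, hvb]

lemma sum_point (u v : V) (t : ℤ) :
    ∑ x : V, ∑ y : V, (if x = u ∧ y = v then t else 0) = t := by
  have h1 : ∀ x : V, ∑ y : V, (if x = u ∧ y = v then t else 0)
      = if x = u then t else 0 := by
    intro x
    by_cases hx : x = u
    · simp only [hx, true_and]
      rw [Finset.sum_ite_eq' Finset.univ v (fun _ => t)]
      simp
    · simp [hx]
  rw [Finset.sum_congr rfl fun x _ => h1 x]
  rw [Finset.sum_ite_eq' Finset.univ u (fun _ => t)]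
  simp

/-- Gale–Hoffman feasibility theorem. -/
lemma galeHoffman : ∀ (N : ℕ) (w : V → V → ℕ), (∑ u, ∑ v, w u v) = N →
    ∀ c : V → ℤ, (∑ v, c v = 0) → (∀ S : Finset V, ∑ u ∈ S, c u ≤ cutZ w S) →
    ∃ J : V → V → ℕ, (∀ u v, J u v ≤ w u v) ∧ ∀ u, wdiv J u = c u := by
  intro N
  induction N using Nat.strong_induction_on with
  | _ N IH =>
    intro w hN c hc h
    classical
    by_cases hc0 : ∀ u, c u = 0
    · refine ⟨fun _ _ => 0, fun u v => Nat.zero_le _, fun u => ?_⟩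
      simp [wdiv, hc0 u]
    · -- there is a vertex with positive excess
      obtain ⟨u, hu⟩ : ∃ u, 0 < c u := by
        by_contra hall
        push_neg at hall
        apply hc0
        intro u
        have := (Finset.sum_eq_zero_iff_of_nonpos (fun x _ => hall x)).mp hc
        exact this u (Finset.mem_univ u)
      -- tight sets avoiding u
      set P : Finset V → Prop := fun S => u ∉ S ∧ cutZ w S ≤ ∑ x ∈ S, c x with hP
      set S' : Finset V := ((Finset.univ : Finset V).powerset.filter P).sup id with hS'
      have memS' : ∀ x, (∃ S : Finset V, P S ∧ x ∈ S) → x ∈ S' := by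
        rintro x ⟨S, hPS, hx⟩
        rw [hS', Finset.mem_sup]
        exact ⟨S, Finset.mem_filter.mpr ⟨Finset.mem_powerset.mpr (Finset.subset_univ S), hPS⟩, hx⟩
      have hPS' : P S' := by
        rw [hS']
        apply Finset.sup_induction
        · rw [hP]
          refine ⟨by simp, ?_⟩
          simp [cutZ]
        · rintro A hA B hB
          rw [hP] at hA hB ⊢
          refine ⟨by simp [Finset.mem_union, hA.1, hB.1], ?_⟩
          have hsub := cutZ_submodular w A B
          have hint := h (A ∩ B)
          have hui := Finset.sum_union_inter (s₁ := A) (s₂ := B) (f := c)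
          have h2 : (A ⊔ B) = A ∪ B := rfl
          rw [h2]
          omega
        · intro S hS
          exact (Finset.mem_filter.mp hS).2
      -- arc out of u leaving S'
      by_cases hv : ∃ v, 0 < w u v ∧ v ∉ S'
      · obtain ⟨v, hv1, hv2⟩ := hv
        set w' : V → V → ℕ := fun x y => if x = u ∧ y = v then w x y - 1 else w x y with hw'
        set c' : V → ℤ := fun x => c x - (if x = u then 1 else 0) + (if x = v then 1 else 0)
          with hc'
        have hrow : ∀ x, (∑ y, w' x y) + (if x = u then 1 else 0) = ∑ y, w x y := by
          intro x
          by_cases hx : x = u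
          · have hwge : 1 ≤ w u v := hv1
            subst hx
            simp only [if_pos rfl]
            have e1 : ∑ y, w' x y = w' x v + ∑ y ∈ Finset.univ.erase v, w' x y :=
              (Finset.add_sum_erase _ _ (Finset.mem_univ v)).symm
            have e2 : ∑ y, w x y = w x v + ∑ y ∈ Finset.univ.erase v, w x y :=
              (Finset.add_sum_erase _ _ (Finset.mem_univ v)).symm
            have e3 : ∑ y ∈ Finset.univ.erase v, w' x y = ∑ y ∈ Finset.univ.erase v, w x y := by
              refine Finset.sum_congr rfl fun y hy => ?_
              have hyv : y ≠ v := Finset.ne_of_mem_erase hy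
              simp [hw', hyv]
            have e4 : w' x v = w x v - 1 := by simp [hw']
            rw [e1, e2, e3, e4]
            simp only [if_true]
            omega
          · simp only [if_neg hx]
            refine Finset.sum_congr rfl fun y _ => ?_
            simp [hw', hx]
        have htot : (∑ x, ∑ y, w' x y) + 1 = N := by
          have e1 : ∑ x, ∑ y, w x y = ∑ x, ((∑ y, w' x y) + (if x = u then 1 else 0)) :=
            Finset.sum_congr rfl fun x _ => (hrow x).symm
          rw [Finset.sum_add_distrib, Finset.sum_ite_eq' Finset.univ u (fun _ => 1)] at e1
          simp only [Finset.mem_univ, if_pos] at e1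
          omega
        have hc'sum : ∑ x, c' x = 0 := by
          simp only [hc']
          rw [Finset.sum_add_distrib, Finset.sum_sub_distrib,
            Finset.sum_ite_eq' Finset.univ u (fun _ => (1 : ℤ)),
            Finset.sum_ite_eq' Finset.univ v (fun _ => (1 : ℤ))]
          simp [hc]
        have hcut' : ∀ S : Finset V, cutZ w S =
            cutZ w' S + (if u ∈ S ∧ v ∉ S then 1 else 0) := by
          intro S
          by_cases hC : u ∈ S ∧ v ∉ S
          · rw [if_pos hC, cutZ_eq_ite, cutZ_eq_ite w' S]
            have key : ∀ x y, (if x ∈ S ∧ y ∉ S then (w x y : ℤ) else 0)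
                = (if x ∈ S ∧ y ∉ S then (w' x y : ℤ) else 0)
                  + (if x = u ∧ y = v then 1 else 0) := by
              intro x y
              by_cases hxy : x = u ∧ y = v
              · obtain ⟨hx, hy⟩ := hxy
                subst hx; subst hy
                rw [if_pos hC, if_pos hC, if_pos (show x = x ∧ y = y from ⟨rfl, rfl⟩)]
                have hwv' : w' x y = w x y - 1 := by simp [hw']
                have hge : (1:ℕ) ≤ w x y := hv1
                rw [hwv']
                rw [Nat.cast_sub hge]
                push_cast
                ring
              · have hww : w' x y = w x y := by simp [hw', hxy]
                rw [hww, if_neg hxy, add_zero]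
            rw [Finset.sum_congr rfl fun x _ => Finset.sum_congr rfl fun y _ => key x y]
            rw [Finset.sum_congr rfl fun x (_ : x ∈ Finset.univ) => Finset.sum_add_distrib]
            rw [Finset.sum_add_distrib, sum_point]
          · rw [if_neg hC, add_zero, cutZ_eq_ite, cutZ_eq_ite]
            refine Finset.sum_congr rfl fun x _ => Finset.sum_congr rfl fun y _ => ?_
            by_cases hxy : x = u ∧ y = v
            · obtain ⟨hx, hy⟩ := hxy
              subst hx; subst hy
              rw [if_neg (fun hmem => hC hmem), if_neg (fun hmem => hC hmem)]
            · have hww : w' x y = w x y := by simp [hw', hxy]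
              rw [hww]
        have hoff' : ∀ S : Finset V, ∑ x ∈ S, c' x ≤ cutZ w' S := by
          intro S
          have hcS : ∑ x ∈ S, c' x = ∑ x ∈ S, c x - (if u ∈ S then 1 else 0)
              + (if v ∈ S then 1 else 0) := by
            simp only [hc']
            rw [Finset.sum_add_distrib, Finset.sum_sub_distrib,
              Finset.sum_ite_eq' S u (fun _ => (1 : ℤ)),
              Finset.sum_ite_eq' S v (fun _ => (1 : ℤ))]
          have hcw := hcut' S
          have hS := h S
          by_cases hvS : v ∈ S
          · by_cases huS : u ∈ S
            · rw [hcS]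
              simp only [hvS, not_true, and_false, if_false] at hcw
              simp only [if_pos hvS, if_pos huS]
              omega
            · -- bad case : need strictness
              have hstrict : ∑ x ∈ S, c x < cutZ w S := by
                rcases lt_or_eq_of_le hS with h' | h'
                · exact h'
                · exfalso
                  refine hv2 (memS' v ⟨S, ?_, hvS⟩)
                  rw [hP]
                  exact ⟨huS, le_of_eq h'.symm⟩
              rw [hcS]
              simp only [hvS, not_true, and_false, if_false] at hcw
              simp only [if_pos hvS, if_neg huS]
              omega
          · by_cases huS : u ∈ S
            · rw [hcS]
              simp only [huS, hvS, not_false_iff, and_self, if_true] at hcw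
              simp only [if_neg hvS, if_pos huS]
              omega
            · rw [hcS]
              simp only [huS, false_and, if_false] at hcw
              simp only [if_neg hvS, if_neg huS]
              omega
        have hNpos : 0 < N := by
          rw [← hN]
          calc 0 < w u v := hv1
          _ ≤ ∑ y, w u y := Finset.single_le_sum (fun y _ => Nat.zero_le _) (Finset.mem_univ v)
          _ ≤ ∑ x, ∑ y, w x y :=
            Finset.single_le_sum (f := fun x => ∑ y, w x y)
              (fun x _ => Nat.zero_le _) (Finset.mem_univ u)
        obtain ⟨J', hle', hdiv'⟩ := IH (∑ x, ∑ y, w' x y) (by omega) w' rfl c' hc'sum hoff'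
        refine ⟨fun x y => J' x y + (if x = u ∧ y = v then 1 else 0), ?_, ?_⟩
        · intro x y
          show J' x y + (if x = u ∧ y = v then 1 else 0) ≤ w x y
          have hxy' := hle' x y
          by_cases hxy : x = u ∧ y = v
          · obtain ⟨hx, hy⟩ := hxy
            subst hx; subst hy
            rw [if_pos (show x = x ∧ y = y from ⟨rfl, rfl⟩)]
            have : w' x y = w x y - 1 := by simp [hw']
            have hge : (1:ℕ) ≤ w x y := hv1
            omega
          · rw [if_neg hxy]
            have : w' x y = w x y := by simp [hw', hxy]
            omega
        · intro x
          have hd := hdiv' x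
          have hout : ∑ y, ((J' x y + if x = u ∧ y = v then 1 else 0 : ℕ) : ℤ)
              = (∑ y, (J' x y : ℤ)) + (if x = u then 1 else 0) := by
            push_cast
            rw [Finset.sum_add_distrib]
            congr 1
            by_cases hx : x = u
            · simp only [hx, true_and]
              rw [Finset.sum_ite_eq' Finset.univ v (fun _ => (1:ℤ))]
              simp
            · simp [hx]
          have hin : ∑ y, ((J' y x + if y = u ∧ x = v then 1 else 0 : ℕ) : ℤ)
              = (∑ y, (J' y x : ℤ)) + (if x = v then 1 else 0) := by
            push_cast
            rw [Finset.sum_add_distrib]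
            congr 1
            by_cases hx : x = v
            · simp only [hx, and_true]
              rw [Finset.sum_ite_eq' Finset.univ u (fun _ => (1:ℤ))]
              simp
            · simp [hx]
          show (∑ y, ((J' x y + if x = u ∧ y = v then 1 else 0 : ℕ) : ℤ))
              - (∑ y, ((J' y x + if y = u ∧ x = v then 1 else 0 : ℕ) : ℤ)) = c x
          rw [hout, hin]
          rw [wdiv] at hd
          simp only [hc'] at hd
          omega
      · exfalso
        push_neg at hv
        have hwu0 : ∀ y, y ∉ S' → w u y = 0 := by
          intro y hy
          by_contra h0
          exact hy (hv y (Nat.pos_of_ne_zero h0))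
        set T : Finset V := insert u S' with hT
        have hcutT : cutZ w T ≤ cutZ w S' := by
          rw [cutZ, Finset.sum_insert hPS'.1]
          have h1 : ∑ y ∈ Tᶜ, (w u y : ℤ) = 0 := by
            apply Finset.sum_eq_zero
            intro y hy
            have : y ∉ S' := fun hy' => (Finset.mem_compl.mp hy) (Finset.mem_insert_of_mem hy')
            simp [hwu0 y this]
          rw [h1, zero_add]
          apply Finset.sum_le_sum
          intro x hx
          apply Finset.sum_le_sum_of_subset_of_nonneg
          · intro y hy
            rw [Finset.mem_compl] at hy ⊢
            exact fun hy' => hy (Finset.mem_insert_of_mem hy')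
          · intro y _ _; positivity
        have hcT := h T
        rw [Finset.sum_insert hPS'.1] at hcT
        have := hPS'.2
        omega

lemma sum_wdiv_eq (J : V → V → ℕ) (S : Finset V) :
    ∑ u ∈ S, wdiv J u =
      (∑ u ∈ S, ∑ v ∈ Sᶜ, (J u v : ℤ)) - ∑ u ∈ S, ∑ v ∈ Sᶜ, (J v u : ℤ) := by
  unfold wdiv
  rw [Finset.sum_sub_distrib]
  have h1 : ∑ u ∈ S, ∑ v, (J u v : ℤ)
      = ∑ u ∈ S, ∑ v ∈ S, (J u v : ℤ) + ∑ u ∈ S, ∑ v ∈ Sᶜ, (J u v : ℤ) := by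
    rw [← Finset.sum_add_distrib]
    refine Finset.sum_congr rfl fun u _ => ?_
    exact (Finset.sum_add_sum_compl S _).symm
  have h2 : ∑ u ∈ S, ∑ v, (J v u : ℤ)
      = ∑ u ∈ S, ∑ v ∈ S, (J v u : ℤ) + ∑ u ∈ S, ∑ v ∈ Sᶜ, (J v u : ℤ) := by
    rw [← Finset.sum_add_distrib]
    refine Finset.sum_congr rfl fun u _ => ?_
    exact (Finset.sum_add_sum_compl S _).symm
  rw [h1, h2, Finset.sum_comm (s := S) (t := S) (f := fun u v => (J u v : ℤ))]
  ring

lemma sum_wdiv_le_cutZ (J : V → V → ℕ) (S : Finset V) :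
    ∑ u ∈ S, wdiv J u ≤ cutZ J S := by
  rw [sum_wdiv_eq]
  have h0 : 0 ≤ ∑ u ∈ S, ∑ v ∈ Sᶜ, (J v u : ℤ) := by positivity
  have : cutZ J S = ∑ u ∈ S, ∑ v ∈ Sᶜ, (J u v : ℤ) := rfl
  omega

lemma wdiv_sub (w J : V → V → ℕ) (hle : ∀ u v, J u v ≤ w u v) (u : V) :
    wdiv (fun x y => w x y - J x y) u = wdiv w u - wdiv J u := by
  unfold wdiv
  have h1 : ∑ v, ((w u v - J u v : ℕ) : ℤ) = ∑ v, ((w u v : ℤ) - (J u v : ℤ)) :=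
    Finset.sum_congr rfl fun v _ => by
      rw [Nat.cast_sub (hle u v)]
  have h2 : ∑ v, ((w v u - J v u : ℕ) : ℤ) = ∑ v, ((w v u : ℤ) - (J v u : ℤ)) :=
    Finset.sum_congr rfl fun v _ => by
      rw [Nat.cast_sub (hle v u)]
  rw [h1, h2, Finset.sum_sub_distrib, Finset.sum_sub_distrib]
  ring

/-- Decomposition of weights into parts with prescribed divergences. -/
lemma decompose (τ : ℕ) (q : V → ℤ) (n : Fin τ → V → ℕ)
    (hn : ∀ i : Fin τ, ∑ u, n i u ≤ 1)
    (hc0 : ∀ i : Fin τ, ∑ u, (q u + (n i u : ℤ)) = 0) :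
    ∀ (I : Finset (Fin τ)) (w : V → V → ℕ),
    (∀ u, wdiv w u = ∑ i ∈ I, (q u + (n i u : ℤ))) →
    ∃ J : Fin τ → V → V → ℕ,
      (∀ u v, ∑ i ∈ I, J i u v ≤ w u v) ∧
      (∀ i ∈ I, ∀ u, wdiv (J i) u = q u + (n i u : ℤ)) := by
  intro I
  induction I using Finset.strongInduction with
  | _ I IH =>
    intro w hdivw
    rcases Finset.eq_empty_or_nonempty I with hI | ⟨k, hk⟩
    · subst hI
      exact ⟨fun _ _ _ => 0, fun u v => by simp, fun i hi => absurd hi (by simp)⟩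
    · -- apply Gale-Hoffman to color k
      have hGH := galeHoffman (∑ u, ∑ v, w u v) w rfl (fun u => q u + (n k u : ℤ)) (hc0 k) ?_
      · obtain ⟨Jk, hJkle, hJkdiv⟩ := hGH
        set w2 : V → V → ℕ := fun x y => w x y - Jk x y with hw2
        have hdivw2 : ∀ u, wdiv w2 u = ∑ i ∈ I.erase k, (q u + (n i u : ℤ)) := by
          intro u
          rw [hw2, wdiv_sub w Jk hJkle u, hdivw u, hJkdiv u,
            ← Finset.add_sum_erase I _ hk]
          ring
        obtain ⟨Jr, hJrle, hJrdiv⟩ := IH (I.erase k) (Finset.erase_ssubset hk) w2 hdivw2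
        refine ⟨fun i u v => if i = k then Jk u v else Jr i u v, ?_, ?_⟩
        · intro u v
          rw [← Finset.add_sum_erase I _ hk]
          dsimp only
          rw [if_pos rfl]
          have he : ∑ i ∈ I.erase k, (if i = k then Jk u v else Jr i u v)
              = ∑ i ∈ I.erase k, Jr i u v := by
            refine Finset.sum_congr rfl fun i hi => ?_
            rw [if_neg (Finset.ne_of_mem_erase hi)]
          rw [he]
          have := hJrle u v
          have := hJkle u v
          simp only [hw2] at *
          omega
        · intro i hi u
          by_cases hik : i = k
          · subst hik
            beta_reduce
            have : (fun u v => if i = i then Jk u v else Jr i u v) = Jk := by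
              funext x y; rw [if_pos rfl]
            rw [this]
            exact hJkdiv u
          · beta_reduce
            have : (fun u v => if i = k then Jk u v else Jr i u v) = Jr i := by
              funext x y; rw [if_neg hik]
            rw [this]
            exact hJrdiv i (Finset.mem_erase.mpr ⟨hik, hi⟩) u
      · -- the Gale-Hoffman cut condition
        intro S
        have hA := sum_wdiv_le_cutZ w S
        have hB : ∑ u ∈ S, wdiv w u
            = (I.card : ℤ) * (∑ u ∈ S, q u) + ∑ i ∈ I, ∑ u ∈ S, (n i u : ℤ) := by
          rw [Finset.sum_congr rfl fun u (_ : u ∈ S) => hdivw u]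
          rw [Finset.sum_comm]
          rw [Finset.sum_congr rfl fun i (_ : i ∈ I) => Finset.sum_add_distrib]
          rw [Finset.sum_add_distrib]
          rw [Finset.sum_const, nsmul_eq_mul]
        set a : ℤ := ∑ u ∈ S, q u with ha
        have htk1 : ∑ u ∈ S, (n k u : ℤ) ≤ 1 := by
          have h1 : ∑ u ∈ S, (n k u : ℤ) ≤ ∑ u, (n k u : ℤ) := by
            apply Finset.sum_le_sum_of_subset_of_nonneg (Finset.subset_univ S)
            intro u _ _; positivity
          have h2 : ∑ u, (n k u : ℤ) = ((∑ u, n k u : ℕ) : ℤ) := by push_cast; rfl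
          have := hn k
          omega
        have htksum : ∑ u ∈ S, (n k u : ℤ) ≤ ∑ i ∈ I, ∑ u ∈ S, (n i u : ℤ) := by
          apply Finset.single_le_sum (f := fun i => ∑ u ∈ S, (n i u : ℤ)) _ hk
          intro i _
          positivity
        have hsums : ∑ u ∈ S, (q u + (n k u : ℤ)) = a + ∑ u ∈ S, (n k u : ℤ) := by
          rw [Finset.sum_add_distrib]
        have hcard1 : 1 ≤ I.card := Finset.card_pos.mpr ⟨k, hk⟩
        have h0cut := cutZ_nonneg w S
        rw [hsums]
        rcases le_or_gt 0 a with hqa | hqa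
        · have hma : a ≤ (I.card : ℤ) * a := by
            nlinarith [Int.ofNat_le.mpr hcard1]
          have hnn : (0:ℤ) ≤ ∑ i ∈ I, ∑ u ∈ S, (n i u : ℤ) := by positivity
          omega
        · omega


lemma cutZ_eq_cast (w : V → V → ℕ) (S : Finset V) : cutZ w S = (cutWeight w S : ℤ) := by
  rw [cutZ, cutWeight]
  push_cast
  rfl


/-- **P2 / [wt,τ,1;eqt]**: if every dicut of the weighted digraph `(D,w)` has weight at
least `τ ≥ 2`, and `ρ(τ,D,w) ≤ 1`, then there is an equitable `w`-weighted packing of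
dijoins of size `τ`. -/
theorem stmt_0 [Nonempty V] (D : V → V → Prop) (w : V → V → ℕ)
    (hirr : ∀ v, ¬ D v v) (hsupp : ∀ u v, ¬ D u v → w u v = 0)
    (τ : ℕ) (hτ : 2 ≤ τ)
    (hcut : ∀ U : Finset V, IsDicutShore D U → τ ≤ cutWeight w U)
    (hρ : ∑ v : V, (((∑ u, w v u : ℤ) - (∑ u, w u v : ℤ)) % (τ : ℤ)) ≤ (τ : ℤ)) :
    ∃ J : Fin τ → V → V → ℕ,
      (∀ u v, ∑ i, J i u v ≤ w u v) ∧
      (∀ i, ∀ U : Finset V, IsDicutShore D U → 1 ≤ cutWeight (J i) U) ∧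
      (∀ U : Finset V, IsMinimalDicutShore D U → ∀ i j,
        |(cutWeight (J i) U : ℤ) - (cutWeight (J j) U : ℤ)| ≤ 1) := by
  classical
  have hτpos : 0 < τ := by omega
  have hτ0 : (0:ℤ) < (τ:ℤ) := by exact_mod_cast hτpos
  set b : V → ℤ := fun u => wdiv w u with hb
  set r : V → ℤ := fun u => b u % (τ:ℤ) with hrdef
  set q : V → ℤ := fun u => b u / (τ:ℤ) with hqdef
  set rn : V → ℕ := fun u => (r u).toNat with hrn
  have hr0 : ∀ u, 0 ≤ r u := fun u => Int.emod_nonneg _ (ne_of_gt hτ0)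
  have hrlt : ∀ u, r u < τ := fun u => Int.emod_lt_of_pos _ hτ0
  have hqr : ∀ u, b u = τ * q u + r u := fun u => (Int.mul_ediv_add_emod (b u) τ).symm
  have hrncast : ∀ u, (rn u : ℤ) = r u := fun u => Int.toNat_of_nonneg (hr0 u)
  have hρ' : ∑ u, r u ≤ (τ:ℤ) := hρ
  have hsumb : ∑ u, b u = 0 := by
    simp only [hb, wdiv]
    rw [Finset.sum_sub_distrib]
    rw [Finset.sum_comm]
    ring
  have hsumr_mod : (∑ u, r u) % τ = 0 := by
    have h1 : (∑ u, b u) % (τ:ℤ) = (∑ u, b u % (τ:ℤ)) % (τ:ℤ) :=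
      Finset.sum_int_mod Finset.univ (τ:ℤ) b
    rw [hsumb] at h1
    have h2 : (∑ u, b u % (τ:ℤ)) = ∑ u, r u := rfl
    rw [h2] at h1
    simpa using h1.symm
  -- the sum of residues is 0 or τ
  have hsumr_cases : ∑ u, r u = 0 ∨ ∑ u, r u = τ := by
    have h0 : 0 ≤ ∑ u, r u := Finset.sum_nonneg fun u _ => hr0 u
    obtain ⟨k, hk⟩ : (τ:ℤ) ∣ ∑ u, r u := Int.dvd_of_emod_eq_zero hsumr_mod
    have hk0 : 0 ≤ k := by nlinarith
    have hk1 : k ≤ 1 := by nlinarith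
    interval_cases k
    · left; omega
    · right; omega
  -- total of rn
  have hrnsum : (∑ u, rn u : ℤ) = ∑ u, r u := by
    push_cast
    exact Finset.sum_congr rfl fun u _ => hrncast u
  have hrnτ : ∑ u, rn u ≤ τ := by
    have : (∑ u, rn u : ℤ) ≤ τ := by rw [hrnsum]; exact hρ'
    exact_mod_cast this
  -- enumeration and blocks
  set e : V ≃ Fin (Fintype.card V) := Fintype.equivFin V with he
  set ord : V → ℕ := fun u => (e u : ℕ) with hord
  have hordinj : Function.Injective ord := fun u u' h => by
    apply e.injective
    exact Fin.ext h
  set start : V → ℕ := fun u => ∑ x ∈ Finset.univ.filter (fun x => ord x < ord u), rn x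
    with hstart
  have hfit : ∀ u, start u + rn u ≤ ∑ x, rn x := by
    intro u
    have hnot : u ∉ Finset.univ.filter (fun x => ord x < ord u) := by simp
    have : start u + rn u = ∑ x ∈ insert u (Finset.univ.filter (fun x => ord x < ord u)), rn x := by
      rw [Finset.sum_insert hnot, hstart]
      ring
    rw [this]
    exact Finset.sum_le_sum_of_subset (Finset.subset_univ _)
  have hmono : ∀ u u', ord u < ord u' → start u + rn u ≤ start u' := by
    intro u u' huu
    have hnot : u ∉ Finset.univ.filter (fun x => ord x < ord u) := by simp
    have h1 : start u + rn u = ∑ x ∈ insert u (Finset.univ.filter (fun x => ord x < ord u)), rn x := by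
      rw [Finset.sum_insert hnot]; ring
    rw [h1, hstart]
    apply Finset.sum_le_sum_of_subset
    intro x hx
    rcases Finset.mem_insert.mp hx with hx | hx
    · subst hx; simp [huu]
    · simp only [Finset.mem_filter, Finset.mem_univ, true_and] at hx ⊢
      omega
  set n : Fin τ → V → ℕ :=
    fun i u => if start u ≤ (i:ℕ) ∧ (i:ℕ) < start u + rn u then 1 else 0 with hn
  -- each vertex's block has rn u colors
  have hcount : ∀ u, ∑ i : Fin τ, n i u = rn u := by
    intro u
    have hub : start u + rn u ≤ τ := le_trans (hfit u) hrnτ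
    rw [hn]
    rw [Fin.sum_univ_eq_sum_range (fun j => if start u ≤ j ∧ j < start u + rn u then 1 else 0) τ]
    have hfe : (Finset.range τ).filter (fun j => start u ≤ j ∧ j < start u + rn u)
        = Finset.Ico (start u) (start u + rn u) := by
      ext j
      simp only [Finset.mem_filter, Finset.mem_range, Finset.mem_Ico]
      omega
    calc (∑ j ∈ Finset.range τ, if start u ≤ j ∧ j < start u + rn u then 1 else 0)
        = ((Finset.range τ).filter (fun j => start u ≤ j ∧ j < start u + rn u)).card := by
          rw [Finset.card_filter]
      _ = rn u := by rw [hfe, Nat.card_Ico]; omega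
  -- each color used at most once overall
  have hdisj : ∀ i : Fin τ, ∑ u, n i u ≤ 1 := by
    intro i
    have hcard : ∑ u, n i u
        = (Finset.univ.filter (fun u => start u ≤ (i:ℕ) ∧ (i:ℕ) < start u + rn u)).card := by
      rw [Finset.card_filter, hn]
    rw [hcard]
    apply Finset.card_le_one.mpr
    intro a ha a' ha'
    simp only [Finset.mem_filter, Finset.mem_univ, true_and] at ha ha'
    by_contra hne
    have hone : ord a ≠ ord a' := fun hh => hne (hordinj hh)
    rcases Nat.lt_or_ge (ord a) (ord a') with hlt | hge
    · have := hmono a a' hlt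
      omega
    · have : ord a' < ord a := by omega
      have := hmono a' a this
      omega
  -- full coverage when residues sum to τ
  have hcover : ∑ u, rn u = τ → ∀ i : Fin τ, ∑ u, n i u = 1 := by
    intro htot i
    by_contra hne
    have h0 : ∑ u, n i u = 0 := by have := hdisj i; omega
    have hdouble : ∑ i : Fin τ, ∑ u, n i u = τ := by
      rw [Finset.sum_comm]
      rw [Finset.sum_congr rfl fun u _ => hcount u]
      exact htot
    have h1 : ∑ j ∈ Finset.univ.erase i, ∑ u, n j u ≤ ∑ j ∈ Finset.univ.erase i, 1 :=
      Finset.sum_le_sum fun j hj => hdisj j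
    rw [Finset.sum_const, smul_eq_mul, mul_one] at h1
    have hcarde : (Finset.univ.erase i).card = τ - 1 := by
      rw [Finset.card_erase_of_mem (Finset.mem_univ i), Finset.card_univ, Fintype.card_fin]
    rw [← Finset.add_sum_erase _ _ (Finset.mem_univ i), h0, zero_add] at hdouble
    omega
    -- the prescribed divergences
  set cc : Fin τ → V → ℤ := fun i u => q u + (n i u : ℤ) with hcc
  have hsq : (τ:ℤ) * (∑ u, q u) + ∑ u, r u = 0 := by
    rw [← hsumb]
    rw [Finset.sum_congr rfl fun u (_ : u ∈ Finset.univ) => hqr u]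
    rw [Finset.sum_add_distrib, Finset.mul_sum]
  have hc0 : ∀ i : Fin τ, ∑ u, cc i u = 0 := by
    intro i
    have hcast : (∑ u, (n i u : ℤ)) = ((∑ u, n i u : ℕ) : ℤ) := by push_cast; rfl
    rw [hcc]
    rw [Finset.sum_add_distrib]
    rcases hsumr_cases with hZ | hT
    · have hr00 : ∀ u, r u = 0 := by
        intro u
        have h := (Finset.sum_eq_zero_iff_of_nonneg (fun x _ => hr0 x)).mp hZ
        exact h u (Finset.mem_univ u)
      have hn0 : ∀ u, n i u = 0 := by
        intro u
        have hrn0 : rn u = 0 := by rw [hrn]; simp [hr00 u]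
        simp only [hn]
        rw [if_neg]
        omega
      have hq0 : ∑ u, q u = 0 := by
        rw [hZ, add_zero] at hsq
        rcases mul_eq_zero.mp hsq with h | h
        · exact absurd h (ne_of_gt hτ0)
        · exact h
      rw [hq0, Finset.sum_congr rfl fun u _ => (by rw [hn0 u]; rfl : ((n i u : ℤ) = 0))]
      simp
    · have hSrn : ∑ u, rn u = τ := by
        have : (∑ u, rn u : ℤ) = (τ:ℤ) := by rw [hrnsum, hT]
        exact_mod_cast this
      have hcov := hcover hSrn i
      have hq1 : ∑ u, q u = -1 := by
        have h2 : (τ:ℤ) * (∑ u, q u) = (τ:ℤ) * (-1) := by rw [hT] at hsq; linarith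
        exact mul_left_cancel₀ (ne_of_gt hτ0) h2
      rw [hq1, hcast, hcov]
      ring
  have hdivw : ∀ u, wdiv w u = ∑ i ∈ (Finset.univ : Finset (Fin τ)), cc i u := by
    intro u
    have hcast : (∑ i : Fin τ, (n i u : ℤ)) = ((∑ i : Fin τ, n i u : ℕ) : ℤ) := by
      push_cast; rfl
    rw [hcc]
    rw [Finset.sum_add_distrib, Finset.sum_const, Finset.card_univ, Fintype.card_fin,
      nsmul_eq_mul, hcast, hcount u, hrncast u]
    rw [show wdiv w u = b u from rfl, hqr u]
  obtain ⟨J, hJle, hJdiv⟩ := decompose τ q n hdisj hc0 Finset.univ w hdivw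
  have hJle1 : ∀ (i : Fin τ) (u v : V), J i u v ≤ w u v := by
    intro i u v
    exact le_trans (Finset.single_le_sum (f := fun i => J i u v)
      (fun _ _ => Nat.zero_le _) (Finset.mem_univ i)) (hJle u v)
  -- cut weight of a shoreless-entry function equals sum of divergences
  have hshore : ∀ (K : V → V → ℕ), (∀ u v, K u v ≤ w u v) → ∀ U : Finset V,
      IsDicutShore D U → (cutWeight K U : ℤ) = ∑ u ∈ U, wdiv K u := by
    intro K hK U hU
    have hz : ∑ u ∈ U, ∑ v ∈ Uᶜ, (K v u : ℤ) = 0 := by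
      apply Finset.sum_eq_zero
      intro u hu
      apply Finset.sum_eq_zero
      intro v hv
      have hD : ¬ D v u := hU.2.2 v (Finset.mem_compl.mp hv) u hu
      have h1 := hsupp v u hD
      have h2 := hK v u
      have : K v u = 0 := by omega
      simp [this]
    have heq := sum_wdiv_eq K U
    rw [hz, sub_zero] at heq
    rw [heq, cutWeight]
    push_cast
    rfl
  -- main cut computation per shore
  have hkey : ∀ U : Finset V, IsDicutShore D U → ∀ i : Fin τ,
      (cutWeight (J i) U : ℤ) = (∑ u ∈ U, q u) + (∑ u ∈ U, (n i u : ℤ)) := by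
    intro U hU i
    rw [hshore (J i) (hJle1 i) U hU]
    rw [Finset.sum_congr rfl fun u (_ : u ∈ U) => hJdiv i (Finset.mem_univ i) u]
    rw [Finset.sum_add_distrib]
  have hniU : ∀ (U : Finset V) (i : Fin τ),
      0 ≤ ∑ u ∈ U, (n i u : ℤ) ∧ ∑ u ∈ U, (n i u : ℤ) ≤ 1 := by
    intro U i
    constructor
    · positivity
    · have h1 : ∑ u ∈ U, (n i u : ℤ) ≤ ∑ u, (n i u : ℤ) := by
        apply Finset.sum_le_sum_of_subset_of_nonneg (Finset.subset_univ U)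
        intro u _ _; positivity
      have h2 : (∑ u, (n i u : ℤ)) = ((∑ u, n i u : ℕ) : ℤ) := by push_cast; rfl
      have h3 := hdisj i
      omega
  have hqU : ∀ U : Finset V, IsDicutShore D U → ∀ i : Fin τ,
      1 ≤ (∑ u ∈ U, q u) + (∑ u ∈ U, (n i u : ℤ)) := by
    intro U hU i
    have hcw : (cutWeight w U : ℤ) = ∑ u ∈ U, b u := by
      rw [hshore w (fun _ _ => le_refl _) U hU]
    have hge : (τ:ℤ) ≤ ∑ u ∈ U, b u := by
      rw [← hcw]
      exact_mod_cast hcut U hU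
    have hsplit : ∑ u ∈ U, b u = (τ:ℤ) * (∑ u ∈ U, q u) + ∑ u ∈ U, r u := by
      rw [Finset.sum_congr rfl fun u (_ : u ∈ U) => hqr u]
      rw [Finset.sum_add_distrib, Finset.mul_sum]
    have hρU0 : 0 ≤ ∑ u ∈ U, r u := Finset.sum_nonneg fun u _ => hr0 u
    have hρUle : ∑ u ∈ U, r u ≤ ∑ u, r u := by
      apply Finset.sum_le_sum_of_subset_of_nonneg (Finset.subset_univ U)
      intro u _ _; exact hr0 u
    have hniU' := hniU U i
    rcases lt_or_eq_of_le (le_trans hρUle hρ') with hlt | heq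
    · -- ρ_U < τ : the floor part is at least 1
      have hpos : 0 < (τ:ℤ) * (∑ u ∈ U, q u) := by omega
      have ha1 : 1 ≤ ∑ u ∈ U, q u := by
        by_contra hcon
        push_neg at hcon
        have : ∑ u ∈ U, q u ≤ 0 := by omega
        nlinarith
      omega
    · -- ρ_U = τ : the block part covers colour i within U
      have hVr : ∑ u, r u = (τ:ℤ) := by omega
      have hSrn : ∑ u, rn u = τ := by
        have : (∑ u, rn u : ℤ) = (τ:ℤ) := by rw [hrnsum, hVr]
        exact_mod_cast this
      have hcov := hcover hSrn i
      -- residues vanish outside U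
      have hcomp0 : ∑ u ∈ Uᶜ, r u = 0 := by
        have := Finset.sum_add_sum_compl U r
        omega
      have hr0c : ∀ u ∈ Uᶜ, r u = 0 := by
        intro u hu
        exact (Finset.sum_eq_zero_iff_of_nonneg (fun x _ => hr0 x)).mp hcomp0 u hu
      have hn0c : ∀ u ∈ Uᶜ, n i u = 0 := by
        intro u hu
        have hrn0 : rn u = 0 := by rw [hrn]; simp [hr0c u hu]
        simp only [hn]
        rw [if_neg]
        omega
      have hnsplit : (∑ u ∈ U, (n i u : ℤ)) = 1 := by
        have h1 := Finset.sum_add_sum_compl U (fun u => (n i u : ℤ))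
        have h2 : ∑ u ∈ Uᶜ, (n i u : ℤ) = 0 :=
          Finset.sum_eq_zero fun u hu => by rw [hn0c u hu]; rfl
        have h3 : (∑ u, (n i u : ℤ)) = ((∑ u, n i u : ℕ) : ℤ) := by push_cast; rfl
        rw [h2, add_zero, h3, hcov] at h1
        exact h1
      have ha0 : 0 ≤ ∑ u ∈ U, q u := by
        have h4 : 0 ≤ (τ:ℤ) * (∑ u ∈ U, q u) := by omega
        by_contra hneg
        push_neg at hneg
        nlinarith
      omega
  refine ⟨J, hJle, ?_, ?_⟩
  · intro i U hU
    have h1 := hkey U hU i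
    have h2 := hqU U hU i
    have : (1:ℤ) ≤ (cutWeight (J i) U : ℤ) := by omega
    exact_mod_cast this
  · intro U hU i j
    have h1 := hkey U hU.1 i
    have h2 := hkey U hU.1 j
    have h3 := hniU U i
    have h4 := hniU U j
    rw [abs_le]
    omega
end

section
/- Let τ ≥ 2 and let (V, D, w) be a sink-regular weighted (τ,τ+1)-bipartite digraph. Then: (1) |a(V)| = τ · disc(V) and ∑_{v ∈ V} ((∑_u w v u − ∑_u w u v) mod τ) = τ · disc(V), where n mod τ denotes the representative of n modulo τ in {0,…,τ−1}; (2) for every dicut shore U, the weight of δ⁺(U) equals |a(U)| − τ · disc(U) (an identity of integers); (3) for every dicut shore U, disc(U) ≤ disc(V) − 1, and if disc(U) = disc(V) − 1 then the weight of δ⁺(U) equals τ and a(U) = a(V). -/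
open Finset

variable {V : Type*} [Fintype V] [DecidableEq V]

/-- The weighted degree of a vertex. -/
def wdeg (w : V → V → ℕ) (v : V) : ℕ := ∑ u, (w u v + w v u)

/-- The set of active vertices: those of weighted degree `τ+1`. -/
def activeFinset (w : V → V → ℕ) (τ : ℕ) : Finset V :=
  Finset.univ.filter fun v => wdeg w v = τ + 1

/-- The discrepancy of a vertex subset `U`: the number of sinks in `U` minus
the number of sources in `U`. -/
def disc (D : V → V → Prop) [DecidableRel D] (U : Finset V) : ℤ :=
  ((U.filter fun v => ∀ u, ¬ D v u).card : ℤ) -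
    ((U.filter fun v => ∀ u, ¬ D u v).card : ℤ)

/-- `(V, D, w)` is a sink-regular weighted `(τ,τ+1)`-bipartite digraph: `D` is
irreflexive, `w` is supported on arcs of `D`, every vertex is a source or a sink,
every source has weighted degree `τ` or `τ+1`, every sink has weighted degree `τ`,
and every dicut has weight at least `τ`. -/
def SinkRegularBipartite (D : V → V → Prop) (w : V → V → ℕ) (τ : ℕ) : Prop :=
  (∀ v, ¬ D v v) ∧ (∀ u v, ¬ D u v → w u v = 0) ∧
  (∀ v : V, (∀ u, ¬ D u v) ∨ (∀ u, ¬ D v u)) ∧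
  (∀ v : V, (∀ u, ¬ D u v) → (wdeg w v = τ ∨ wdeg w v = τ + 1)) ∧
  (∀ v : V, (∀ u, ¬ D v u) → wdeg w v = τ) ∧
  (∀ U : Finset V, IsDicutShore D U → τ ≤ cutWeight w U)

/-- Auxiliary counting lemma: for every vertex subset `U`, the sum over `U` of
(out-weight minus in-weight) equals `|a(U)| - τ·disc(U)`. -/
lemma aux_sum_f (D : V → V → Prop) [DecidableRel D] (w : V → V → ℕ) (τ : ℕ)
    (hτ : 2 ≤ τ) (h : SinkRegularBipartite D w τ) (U : Finset V) :
    ∑ v ∈ U, ((∑ u, w v u : ℤ) - (∑ u, w u v : ℤ)) =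
      ((activeFinset w τ ∩ U).card : ℤ) - (τ : ℤ) * disc D U := by
  classical
  obtain ⟨-, hsupp, hsos, hsrcdeg, hsnkdeg, -⟩ := h
  have hnb : ∀ v : V, (∀ u, ¬ D u v) → (∀ u, ¬ D v u) → False := by
    intro v hs ht
    have h0 : wdeg w v = 0 :=
      Finset.sum_eq_zero fun u _ => by simp [hsupp u v (hs u), hsupp v u (ht u)]
    have := hsnkdeg v ht
    omega
  have hsplit := Finset.sum_filter_add_sum_filter_not U (fun v => ∀ u, ¬ D u v)
      (fun v => ((∑ u, w v u : ℤ) - (∑ u, w u v : ℤ)))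
  have hfilt : U.filter (fun v => ¬ ∀ u, ¬ D u v) = U.filter (fun v => ∀ u, ¬ D v u) := by
    ext v
    simp only [Finset.mem_filter, and_congr_right_iff]
    intro _
    constructor
    · intro hns
      rcases hsos v with hs | ht
      · exact absurd hs hns
      · exact ht
    · intro ht hs
      exact hnb v hs ht
  rw [hfilt] at hsplit
  have hsnk : ∑ v ∈ U.filter (fun v => ∀ u, ¬ D v u),
      ((∑ u, w v u : ℤ) - (∑ u, w u v : ℤ))
      = -((τ : ℤ) * ((U.filter fun v => ∀ u, ¬ D v u).card : ℤ)) := by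
    have step : ∀ v ∈ U.filter (fun v => ∀ u, ¬ D v u),
        ((∑ u, w v u : ℤ) - (∑ u, w u v : ℤ)) = -(τ : ℤ) := by
      intro v hv
      have ht := (Finset.mem_filter.mp hv).2
      have h1 : ∑ u, w v u = 0 := Finset.sum_eq_zero fun u _ => hsupp v u (ht u)
      have h2 : ∑ u, w u v = τ := by
        have hd := hsnkdeg v ht
        unfold wdeg at hd
        rw [Finset.sum_add_distrib, h1] at hd
        omega
      have g1 : ∑ u, (w v u : ℤ) = 0 := by exact_mod_cast congrArg (Nat.cast : ℕ → ℤ) h1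
      have g2 : ∑ u, (w u v : ℤ) = (τ : ℤ) := by exact_mod_cast congrArg (Nat.cast : ℕ → ℤ) h2
      rw [g1, g2]
      ring
    rw [Finset.sum_congr rfl step, Finset.sum_const, nsmul_eq_mul]
    ring
  have hsrc : ∑ v ∈ U.filter (fun v => ∀ u, ¬ D u v),
      ((∑ u, w v u : ℤ) - (∑ u, w u v : ℤ))
      = (τ : ℤ) * ((U.filter fun v => ∀ u, ¬ D u v).card : ℤ)
        + ((activeFinset w τ ∩ U).card : ℤ) := by
    have step : ∀ v ∈ U.filter (fun v => ∀ u, ¬ D u v),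
        ((∑ u, w v u : ℤ) - (∑ u, w u v : ℤ))
          = (τ : ℤ) + (if wdeg w v = τ + 1 then (1 : ℤ) else 0) := by
      intro v hv
      have hs := (Finset.mem_filter.mp hv).2
      have h1 : ∑ u, w u v = 0 := Finset.sum_eq_zero fun u _ => hsupp u v (hs u)
      have h2 : wdeg w v = ∑ u, w v u := by
        unfold wdeg
        rw [Finset.sum_add_distrib, h1, zero_add]
      have g1 : ∑ u, (w u v : ℤ) = 0 := by exact_mod_cast congrArg (Nat.cast : ℕ → ℤ) h1
      have g2 : ∑ u, (w v u : ℤ) = (wdeg w v : ℤ) := by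
        exact_mod_cast congrArg (Nat.cast : ℕ → ℤ) h2.symm
      rcases hsrcdeg v hs with hd | hd
      · rw [g1, g2, hd, if_neg (by omega)]
        ring
      · rw [g1, g2, hd, if_pos rfl]
        push_cast
        ring
    have hact : (U.filter (fun v => ∀ u, ¬ D u v)).filter (fun v => wdeg w v = τ + 1)
        = activeFinset w τ ∩ U := by
      ext v
      simp only [Finset.mem_filter, Finset.mem_inter, activeFinset, Finset.mem_univ,
        true_and]
      constructor
      · rintro ⟨⟨hvU, -⟩, ha⟩
        exact ⟨ha, hvU⟩
      · rintro ⟨ha, hvU⟩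
        refine ⟨⟨hvU, ?_⟩, ha⟩
        rcases hsos v with hs | ht
        · exact hs
        · have := hsnkdeg v ht
          omega
    rw [Finset.sum_congr rfl step, Finset.sum_add_distrib, Finset.sum_const,
      Finset.sum_boole, hact, nsmul_eq_mul]
    ring
  rw [← hsplit, hsrc, hsnk]
  unfold disc
  ring

/-- Basic properties of discrepancy in a sink-regular weighted `(τ,τ+1)`-bipartite
digraph (Lemma on `disc`). -/
theorem stmt_6 [Nonempty V] (D : V → V → Prop) [DecidableRel D] (w : V → V → ℕ)
    (τ : ℕ) (hτ : 2 ≤ τ) (h : SinkRegularBipartite D w τ) :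
    (((activeFinset w τ).card : ℤ) = (τ : ℤ) * disc D Finset.univ ∧
      (∑ v : V, (((∑ u, w v u : ℤ) - (∑ u, w u v : ℤ)) % (τ : ℤ)))
        = (τ : ℤ) * disc D Finset.univ) ∧
    (∀ U : Finset V, IsDicutShore D U →
      (cutWeight w U : ℤ) = ((activeFinset w τ ∩ U).card : ℤ) - (τ : ℤ) * disc D U) ∧
    (∀ U : Finset V, IsDicutShore D U →
      disc D U ≤ disc D Finset.univ - 1 ∧
      (disc D U = disc D Finset.univ - 1 →
        cutWeight w U = τ ∧ activeFinset w τ ∩ U = activeFinset w τ)) := by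
  classical
  have key := aux_sum_f D w τ hτ h
  obtain ⟨-, hsupp, hsos, hsrcdeg, hsnkdeg, hdicut⟩ := h
  -- the total out-weight equals the total in-weight
  have hzero : ∑ v : V, ((∑ u, w v u : ℤ) - (∑ u, w u v : ℤ)) = 0 := by
    rw [Finset.sum_sub_distrib]
    have hc : ∑ v : V, ∑ u : V, (w v u : ℤ) = ∑ v : V, ∑ u : V, (w u v : ℤ) :=
      Finset.sum_comm
    rw [hc, sub_self]
  have h1a : ((activeFinset w τ).card : ℤ) = (τ : ℤ) * disc D Finset.univ := by
    have hk := key Finset.univ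
    rw [Finset.inter_univ] at hk
    linarith [hk, hzero]
  -- pointwise computation of the residues
  have step : ∀ v : V, (((∑ u, w v u : ℤ) - (∑ u, w u v : ℤ)) % (τ : ℤ))
      = if wdeg w v = τ + 1 then (1 : ℤ) else 0 := by
    intro v
    rcases hsos v with hs | ht
    · have h1 : ∑ u, w u v = 0 := Finset.sum_eq_zero fun u _ => hsupp u v (hs u)
      have h2 : wdeg w v = ∑ u, w v u := by
        unfold wdeg
        rw [Finset.sum_add_distrib, h1, zero_add]
      have g1 : ∑ u, (w u v : ℤ) = 0 := by exact_mod_cast congrArg (Nat.cast : ℕ → ℤ) h1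
      have g2 : ∑ u, (w v u : ℤ) = (wdeg w v : ℤ) := by
        exact_mod_cast congrArg (Nat.cast : ℕ → ℤ) h2.symm
      rcases hsrcdeg v hs with hd | hd
      · rw [g1, g2, hd, if_neg (by omega)]
        rw [sub_zero, Int.emod_self]
      · rw [g1, g2, hd, if_pos rfl]
        push_cast
        rw [sub_zero]
        have h1lt : (1 : ℤ) < (τ : ℤ) := by exact_mod_cast hτ
        calc ((τ : ℤ) + 1) % (τ : ℤ) = (1 + (τ : ℤ) * 1) % (τ : ℤ) := by
              congr 1
              ring
          _ = 1 % (τ : ℤ) := Int.add_mul_emod_self_left 1 (τ : ℤ) 1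
          _ = 1 := Int.emod_eq_of_lt (by norm_num) h1lt
    · have h1 : ∑ u, w v u = 0 := Finset.sum_eq_zero fun u _ => hsupp v u (ht u)
      have hd := hsnkdeg v ht
      have h2 : ∑ u, w u v = τ := by
        unfold wdeg at hd
        rw [Finset.sum_add_distrib, h1] at hd
        omega
      have g1 : ∑ u, (w v u : ℤ) = 0 := by exact_mod_cast congrArg (Nat.cast : ℕ → ℤ) h1
      have g2 : ∑ u, (w u v : ℤ) = (τ : ℤ) := by exact_mod_cast congrArg (Nat.cast : ℕ → ℤ) h2
      rw [g1, g2, if_neg (by omega)]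
      rw [zero_sub]
      exact Int.emod_eq_zero_of_dvd ⟨-1, by ring⟩
  have h1b : ∑ v : V, (((∑ u, w v u : ℤ) - (∑ u, w u v : ℤ)) % (τ : ℤ))
      = ((activeFinset w τ).card : ℤ) := by
    calc ∑ v : V, (((∑ u, w v u : ℤ) - (∑ u, w u v : ℤ)) % (τ : ℤ))
        = ∑ v : V, (if wdeg w v = τ + 1 then (1 : ℤ) else 0) :=
          Finset.sum_congr rfl fun v _ => step v
      _ = ((activeFinset w τ).card : ℤ) := by
          rw [Finset.sum_boole]
          rfl
  -- part 2
  have h2 : ∀ U : Finset V, IsDicutShore D U →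
      (cutWeight w U : ℤ) = ((activeFinset w τ ∩ U).card : ℤ) - (τ : ℤ) * disc D U := by
    intro U hU
    rw [← key U]
    have hsplitter : ∀ v ∈ U, ((∑ u, w v u : ℤ) - (∑ u, w u v : ℤ))
        = (∑ u ∈ Uᶜ, (w v u : ℤ))
          + ((∑ u ∈ U, (w v u : ℤ)) - (∑ u ∈ U, (w u v : ℤ))) := by
      intro v hv
      have e1 : ∑ u, (w v u : ℤ) = ∑ u ∈ U, (w v u : ℤ) + ∑ u ∈ Uᶜ, (w v u : ℤ) :=
        (Finset.sum_add_sum_compl U _).symm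
      have e2 : ∑ u, (w u v : ℤ) = ∑ u ∈ U, (w u v : ℤ) + ∑ u ∈ Uᶜ, (w u v : ℤ) :=
        (Finset.sum_add_sum_compl U _).symm
      have e3 : ∑ u ∈ Uᶜ, (w u v : ℤ) = 0 :=
        Finset.sum_eq_zero fun u hu => by
          exact_mod_cast hsupp u v (hU.2.2 u (Finset.mem_compl.mp hu) v hv)
      rw [e1, e2, e3]
      ring
    have hcomm : ∑ v ∈ U, ∑ u ∈ U, (w v u : ℤ) = ∑ v ∈ U, ∑ u ∈ U, (w u v : ℤ) :=
      Finset.sum_comm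
    rw [Finset.sum_congr rfl hsplitter, Finset.sum_add_distrib, Finset.sum_sub_distrib,
      hcomm, sub_self, add_zero]
    unfold cutWeight
    push_cast
    rfl
  refine ⟨⟨h1a, by rw [h1b]; exact h1a⟩, h2, ?_⟩
  intro U hU
  have hge : (τ : ℤ) ≤ (cutWeight w U : ℤ) := by exact_mod_cast hdicut U hU
  have hcut := h2 U hU
  have hle : ((activeFinset w τ ∩ U).card : ℤ) ≤ ((activeFinset w τ).card : ℤ) := by
    exact_mod_cast Finset.card_le_card Finset.inter_subset_left
  have hτpos : (0 : ℤ) < (τ : ℤ) := by exact_mod_cast (by omega : 0 < τ)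
  constructor
  · have hmul : (τ : ℤ) * (disc D U + 1) ≤ (τ : ℤ) * disc D Finset.univ := by
      nlinarith [hge, hcut, hle, h1a]
    have := le_of_mul_le_mul_left hmul hτpos
    linarith
  · intro heq
    have hAU : ((activeFinset w τ ∩ U).card : ℤ) = ((activeFinset w τ).card : ℤ) := by
      nlinarith [hge, hcut, hle, h1a, heq]
    have hcutτ : (cutWeight w U : ℤ) = (τ : ℤ) := by
      nlinarith [hcut, hAU, h1a, heq]
    have hsets : activeFinset w τ ∩ U = activeFinset w τ :=
      Finset.eq_of_subset_of_card_le Finset.inter_subset_left (by exact_mod_cast hAU.ge)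
    exact ⟨by exact_mod_cast hcutτ, hsets⟩
end

section
/- Let τ ≥ 2, let (V, D, w) be a sink-regular weighted (τ,τ+1)-bipartite digraph, and let J be a rounded 1-factor. Then: (1) |dc(J)| = disc(V); (2) for every dicut shore U, ∑_{u ∈ U, v ∉ U} J u v = |dc(J) ∩ U| − disc(U) (an identity of integers); (3) ∑_{u ∈ U, v ∉ U} J u v ≥ 1 holds for every dicut shore U if and only if |dc(J) ∩ U| ≥ 1 + disc(U) holds for every dicut shore U. -/
open Finset

variable {V : Type*} [Fintype V] [DecidableEq V]

/-- The degree of a vertex in the arc (multi)set `J`. -/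
def Jdeg (J : V → V → ℕ) (v : V) : ℕ := ∑ u, (J u v + J v u)

/-- A rounded `1`-factor of `(D,w)`: `J ≤ w` pointwise, every inactive vertex has
`J`-degree `1`, and every active vertex has `J`-degree `1` or `2`. -/
def IsRounded1Factor (w : V → V → ℕ) (τ : ℕ) (J : V → V → ℕ) : Prop :=
  (∀ u v, J u v ≤ w u v) ∧
  (∀ v : V, wdeg w v ≠ τ + 1 → Jdeg J v = 1) ∧
  (∀ v : V, wdeg w v = τ + 1 → (Jdeg J v = 1 ∨ Jdeg J v = 2))

/-- The set of dyad centers of `J`: vertices of `J`-degree `2`. -/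
def dyadCenters (J : V → V → ℕ) : Finset V :=
  Finset.univ.filter fun v => Jdeg J v = 2


lemma key_lemma {V : Type*} [Fintype V] [DecidableEq V]
    (D : V → V → Prop) [DecidableRel D] (w : V → V → ℕ) (τ : ℕ)
    (hτ : 2 ≤ τ) (h : SinkRegularBipartite D w τ) (J : V → V → ℕ)
    (hJ : IsRounded1Factor w τ J) (U : Finset V)
    (hU : ∀ v ∉ U, ∀ u ∈ U, ¬ D v u) :
    (cutWeight J U : ℤ) = ((dyadCenters J ∩ U).card : ℤ) - disc D U := by
  obtain ⟨hirr, hw0, hsvt, hsrc, hsnk, hcut⟩ := h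
  obtain ⟨hJw, hJ1, hJ2⟩ := hJ
  have hJ0 : ∀ u v, ¬ D u v → J u v = 0 := fun u v hd =>
    Nat.le_zero.mp (hw0 u v hd ▸ hJw u v)
  -- no vertex is both a source and a sink
  have hnb : ∀ v : V, (∀ u, ¬ D u v) → ¬ (∀ u, ¬ D v u) := by
    intro v hin hout
    have h0 : wdeg w v = 0 := by
      apply Finset.sum_eq_zero
      intro u _
      simp [hw0 u v (hin u), hw0 v u (hout u)]
    have := hsnk v hout
    omega
  have hsinkJ : ∀ v : V, (∀ u, ¬ D v u) → Jdeg J v = 1 := by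
    intro v hv
    apply hJ1
    rw [hsnk v hv]
    omega
  have hJdeg : ∀ v : V, Jdeg J v = 1 ∨ Jdeg J v = 2 := by
    intro v
    by_cases hv : wdeg w v = τ + 1
    · exact hJ2 v hv
    · exact Or.inl (hJ1 v hv)
  set S := U.filter (fun v => ∀ u, ¬ D u v) with hS
  set T := U.filter (fun v => ∀ u, ¬ D v u) with hT
  have hJdegZ : ∀ v : V, (Jdeg J v : ℤ) = ∑ u, (J u v : ℤ) + ∑ u, (J v u : ℤ) := by
    intro v
    unfold Jdeg
    push_cast
    rw [Finset.sum_add_distrib]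
  -- global identity: sum over U of (out - in) equals the cut weight
  have e1 : ∀ v ∈ U, ∑ u ∈ Uᶜ, (J u v : ℤ) = 0 := by
    intro v hv
    apply Finset.sum_eq_zero
    intro u hu
    have : J u v = 0 := hJ0 u v (hU u (Finset.mem_compl.mp hu) v hv)
    exact_mod_cast this
  have step1 : ∑ v ∈ U, ((∑ u, (J v u : ℤ)) - ∑ u, (J u v : ℤ)) = (cutWeight J U : ℤ) := by
    rw [Finset.sum_sub_distrib]
    have h1 : ∑ v ∈ U, ∑ u, (J v u : ℤ)
        = ∑ v ∈ U, ∑ u ∈ U, (J v u : ℤ) + ∑ v ∈ U, ∑ u ∈ Uᶜ, (J v u : ℤ) := by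
      rw [← Finset.sum_add_distrib]
      exact Finset.sum_congr rfl fun v _ => (Finset.sum_add_sum_compl U _).symm
    have h2 : ∑ v ∈ U, ∑ u, (J u v : ℤ) = ∑ v ∈ U, ∑ u ∈ U, (J u v : ℤ) := by
      have hh := Finset.sum_congr rfl fun v (hv : v ∈ U) =>
        (Finset.sum_add_sum_compl U (fun u => (J u v : ℤ))).symm
      rw [hh, Finset.sum_add_distrib, Finset.sum_eq_zero e1, add_zero]
    have h3 : ∑ v ∈ U, ∑ u ∈ U, (J v u : ℤ) = ∑ v ∈ U, ∑ u ∈ U, (J u v : ℤ) :=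
      Finset.sum_comm
    have h4 : (cutWeight J U : ℤ) = ∑ v ∈ U, ∑ u ∈ Uᶜ, (J v u : ℤ) := by
      unfold cutWeight
      push_cast
      rfl
    rw [h1, h2, h3, h4]
    ring
  -- split U into sources and sinks
  have hUsplit : ∑ v ∈ U, ((∑ u, (J v u : ℤ)) - ∑ u, (J u v : ℤ))
      = ∑ v ∈ S, ((∑ u, (J v u : ℤ)) - ∑ u, (J u v : ℤ))
        + ∑ v ∈ T, ((∑ u, (J v u : ℤ)) - ∑ u, (J u v : ℤ)) := by
    rw [← Finset.sum_filter_add_sum_filter_not U (fun v => ∀ u, ¬ D u v)]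
    congr 1
    apply Finset.sum_congr _ fun _ _ => rfl
    ext v
    simp only [Finset.mem_filter, hT]
    constructor
    · rintro ⟨hv, hns⟩
      exact ⟨hv, (hsvt v).resolve_left hns⟩
    · rintro ⟨hv, hs⟩
      exact ⟨hv, fun hsr => hnb v hsr hs⟩
  have hSval : ∀ v ∈ S, ((∑ u, (J v u : ℤ)) - ∑ u, (J u v : ℤ)) = (Jdeg J v : ℤ) := by
    intro v hv
    have hsrcv : ∀ u, ¬ D u v := (Finset.mem_filter.mp hv).2
    have hin : ∑ u, (J u v : ℤ) = 0 := by
      apply Finset.sum_eq_zero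
      intro u _
      exact_mod_cast hJ0 u v (hsrcv u)
    rw [hJdegZ v, hin]
    ring
  have hTval : ∀ v ∈ T, ((∑ u, (J v u : ℤ)) - ∑ u, (J u v : ℤ)) = -1 := by
    intro v hv
    have hsnkv : ∀ u, ¬ D v u := (Finset.mem_filter.mp hv).2
    have hout : ∑ u, (J v u : ℤ) = 0 := by
      apply Finset.sum_eq_zero
      intro u _
      exact_mod_cast hJ0 v u (hsnkv u)
    have h1 : (Jdeg J v : ℤ) = 1 := by exact_mod_cast hsinkJ v hsnkv
    rw [hJdegZ v] at h1
    rw [hout] at h1 ⊢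
    linarith
  -- sum of J-degrees over the sources in U
  have hSsum : ∑ v ∈ S, (Jdeg J v : ℤ)
      = (S.card : ℤ) + ((S.filter fun v => Jdeg J v = 2).card : ℤ) := by
    rw [← Finset.sum_filter_add_sum_filter_not S (fun v => Jdeg J v = 2)]
    have ha : ∑ v ∈ S.filter (fun v => Jdeg J v = 2), (Jdeg J v : ℤ)
        = 2 * ((S.filter fun v => Jdeg J v = 2).card : ℤ) := by
      rw [Finset.sum_congr rfl (fun v hv => by
        rw [(Finset.mem_filter.mp hv).2]), Finset.sum_const]
      push_cast
      ring
    have hb : ∑ v ∈ S.filter (fun v => ¬ Jdeg J v = 2), (Jdeg J v : ℤ)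
        = ((S.filter fun v => ¬ Jdeg J v = 2).card : ℤ) := by
      rw [Finset.sum_congr rfl (fun v hv => by
        have := (hJdeg v).resolve_right (Finset.mem_filter.mp hv).2
        rw [this]), Finset.sum_const]
      push_cast
      ring
    have hc : S.card = (S.filter fun v => Jdeg J v = 2).card
        + (S.filter fun v => ¬ Jdeg J v = 2).card :=
      (Finset.card_filter_add_card_filter_not _).symm
    rw [ha, hb]
    push_cast [hc]
    ring
  -- dyad centers in U are exactly the sources in U of J-degree 2
  have hdc : dyadCenters J ∩ U = S.filter fun v => Jdeg J v = 2 := by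
    ext v
    simp only [dyadCenters, hS, Finset.mem_inter, Finset.mem_filter, Finset.mem_univ,
      true_and]
    constructor
    · rintro ⟨h2, hv⟩
      refine ⟨⟨hv, ?_⟩, h2⟩
      rcases hsvt v with hsr | hsk
      · exact hsr
      · exact absurd (hsinkJ v hsk) (by omega)
    · rintro ⟨⟨hv, _⟩, h2⟩
      exact ⟨h2, hv⟩
  have hdisc : disc D U = (T.card : ℤ) - (S.card : ℤ) := rfl
  rw [← step1, hUsplit, Finset.sum_congr rfl hSval, Finset.sum_congr rfl hTval,
    Finset.sum_const, hSsum, hdc, hdisc]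
  ring

/-- Properties of rounded `1`-factors in a sink-regular weighted `(τ,τ+1)`-bipartite
digraph. -/
theorem stmt_7 [Nonempty V] (D : V → V → Prop) [DecidableRel D] (w : V → V → ℕ)
    (τ : ℕ) (hτ : 2 ≤ τ) (h : SinkRegularBipartite D w τ)
    (J : V → V → ℕ) (hJ : IsRounded1Factor w τ J) :
    (((dyadCenters J).card : ℤ) = disc D Finset.univ) ∧
    (∀ U : Finset V, IsDicutShore D U →
      (cutWeight J U : ℤ) = ((dyadCenters J ∩ U).card : ℤ) - disc D U) ∧
    ((∀ U : Finset V, IsDicutShore D U → 1 ≤ cutWeight J U) ↔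
      (∀ U : Finset V, IsDicutShore D U →
        1 + disc D U ≤ ((dyadCenters J ∩ U).card : ℤ))) := by
  have key := key_lemma D w τ hτ h J hJ
  have h1 : ((dyadCenters J).card : ℤ) = disc D Finset.univ := by
    have := key Finset.univ (by simp)
    have hcw : cutWeight J Finset.univ = 0 := by
      unfold cutWeight
      simp
    rw [hcw, Finset.inter_univ] at this
    push_cast at this
    linarith
  refine ⟨h1, fun U hU => key U hU.2.2, ?_⟩
  constructor
  · intro H U hU
    have := key U hU.2.2
    have h2 := H U hU
    omega
  · intro H U hU
    have := key U hU.2.2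
    have h2 := H U hU
    omega
end

section
/- Let D : V → V → Prop be an irreflexive relation on a finite nonempty type V such that every vertex is a source (no arc of D enters it) or a sink (no arc of D leaves it), and every vertex is incident with at least one arc. Let S be the set of sources and T the set of sinks, and let b : V → ℕ. Then there exists a perfect b-matching if and only if ∑_{s ∈ S} b s = ∑_{t ∈ T} b t and, for every dicut shore U, ∑_{s ∈ U ∩ S} b s ≥ ∑_{t ∈ U ∩ T} b t. -/
/-!
Necessity is flow counting: every arc of a bipartite digraph runs from a source to a sink, so
the demand `b` of the sinks in a shore `U` is met by arcs leaving sources in `U`, and with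
`U = univ` applied to `D` and to its reverse this gives equal totals.
Sufficiency is Hall's theorem for `b v` copies of each vertex: a set `B` of sinks has at least
`∑ B, b` copies of sources among its in-neighbours `N(B)`, by the cut condition for the shore
`B ∪ N(B)`, and the equal totals make the resulting injective assignment a bijection.
-/

open Finset

variable {V : Type*} [Fintype V] [DecidableEq V]

section Transportation

variable {α β : Type*} [Fintype α] [Fintype β] [DecidableEq α] [DecidableEq β]

lemma card_filter_fst_mem_sigma (c : α → ℕ) (N : Finset α) :
    #{p : Σ i, Fin (c i) | p.1 ∈ N} = ∑ i ∈ N, c i := by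
  have h : ({p | p.1 ∈ N} : Finset (Σ i, Fin (c i))) = N.sigma fun _ => univ := by
    ext
    simp
  rw [h, card_sigma]
  simp

lemma card_filter_fst_eq_sigma (c : α → ℕ) (i : α) :
    #{p : Σ i, Fin (c i) | p.1 = i} = c i := by
  simpa using card_filter_fst_mem_sigma c {i}

lemma sum_card_filter_eq_and {ι : Type*} [Fintype ι] (P : ι → Prop) [DecidablePred P]
    (g : ι → β) : ∑ k, #{q | g q = k ∧ P q} = #{q | P q} := by
  rw [card_eq_sum_card_fiberwise (f := g) (t := univ) fun _ _ => mem_univ _]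
  simp only [filter_filter, and_comm]

/-- Gale's integral supply–demand theorem, by Hall's theorem for `a i` copies of each supply
point `i` and `c j` copies of each demand point `j`. -/
theorem exists_transportation (R : α → β → Prop) [DecidableRel R] (a : α → ℕ) (c : β → ℕ)
    (hsum : ∑ i, a i = ∑ j, c j)
    (hall : ∀ B : Finset β, ∑ j ∈ B, c j ≤ ∑ i with ∃ j ∈ B, R i j, a i) :
    ∃ x : α → β → ℕ, (∀ i j, ¬ R i j → x i j = 0) ∧
      (∀ i, ∑ j, x i j = a i) ∧ ∀ j, ∑ i, x i j = c j := by
  let nbr (q : Σ j, Fin (c j)) : Finset (Σ i, Fin (a i)) := {p | R p.1 q.1}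
  have hall_copies (A : Finset (Σ j, Fin (c j))) : #A ≤ #(A.biUnion nbr) := by
    have hN : A.biUnion nbr = ({p | p.1 ∈ ({i | ∃ j ∈ A.image Sigma.fst, R i j} : Finset α)} :
        Finset (Σ i, Fin (a i))) := by
      ext p
      simp [nbr]
    calc #A ≤ #{q : Σ j, Fin (c j) | q.1 ∈ A.image Sigma.fst} :=
          card_le_card fun q hq => by simpa using ⟨q.2, hq⟩
      _ = ∑ j ∈ A.image Sigma.fst, c j := card_filter_fst_mem_sigma c _
      _ ≤ _ := hall _
      _ = #(A.biUnion nbr) := by rw [hN, card_filter_fst_mem_sigma]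
  obtain ⟨f, hf_inj, hf_nbr⟩ := (all_card_le_biUnion_card_iff_exists_injective nbr).mp hall_copies
  have hf_bij : f.Bijective :=
    (Fintype.bijective_iff_injective_and_card f).mpr ⟨hf_inj, by simp [Fintype.card_sigma, hsum]⟩
  let e := Equiv.ofBijective f hf_bij
  refine ⟨fun i j => #{q | (e q).1 = i ∧ q.1 = j}, fun i j hR => ?_, fun i => ?_, fun j => ?_⟩
  · refine card_eq_zero.mpr (filter_eq_empty_iff.mpr ?_)
    rintro q - ⟨rfl, rfl⟩
    exact hR (by simpa [nbr, e] using hf_nbr q)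
  · simp only [and_comm (a := (e _).1 = i)]
    rw [sum_card_filter_eq_and, ← card_filter_fst_eq_sigma a i]
    exact card_equiv e (by simp [e])
  · rw [sum_card_filter_eq_and, card_filter_fst_eq_sigma]

end Transportation

section BipartiteDigraph

variable {α : Type*}

abbrev IsSource (D : α → α → Prop) (v : α) : Prop := ∀ u, ¬ D u v

abbrev IsSink (D : α → α → Prop) (v : α) : Prop := ∀ u, ¬ D v u

def NoArcEnters (D : α → α → Prop) (U : Finset α) : Prop := ∀ v ∉ U, ∀ u ∈ U, ¬ D v u

def IsPerfectBMatching [Fintype α] (D : α → α → Prop) (b : α → ℕ) (x : α → α → ℕ) : Prop :=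
  (∀ u v, ¬ D u v → x u v = 0) ∧ ∀ v, ∑ u, (x u v + x v u) = b v

lemma noArcEnters_univ [Fintype α] {D : α → α → Prop} : NoArcEnters D univ :=
  fun v hv => absurd (mem_univ v) hv

lemma isSource_of_adj {D : α → α → Prop} (hbip : ∀ v, IsSource D v ∨ IsSink D v) {u v : α}
    (h : D u v) : IsSource D u :=
  (hbip u).resolve_right fun hu => hu v h

lemma not_isSink_of_isSource {D : α → α → Prop} (hdeg : ∀ v, ∃ u, D u v ∨ D v u) {v : α}
    (hv : IsSource D v) : ¬ IsSink D v := fun hv' => by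
  obtain ⟨u, h | h⟩ := hdeg v
  exacts [hv u h, hv' u h]

namespace IsPerfectBMatching

variable [Fintype α] {D : α → α → Prop} {b : α → ℕ} {x : α → α → ℕ}

lemma eq_sum_out (hx : IsPerfectBMatching D b x) {v : α} (hv : IsSource D v) :
    b v = ∑ u, x v u := by
  rw [← hx.2 v]
  exact sum_congr rfl fun u _ => by rw [hx.1 u v (hv u), zero_add]

lemma eq_sum_in (hx : IsPerfectBMatching D b x) {v : α} (hv : IsSink D v) :
    b v = ∑ u, x u v := by
  rw [← hx.2 v]
  exact sum_congr rfl fun u _ => by rw [hx.1 v u (hv u), add_zero]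

lemma reverse (hx : IsPerfectBMatching D b x) :
    IsPerfectBMatching (fun u v => D v u) b fun u v => x v u :=
  ⟨fun u v h => hx.1 v u h, fun v => by simpa only [add_comm] using hx.2 v⟩

variable [DecidableRel D]

lemma sum_sinks_le_sum_sources (hx : IsPerfectBMatching D b x)
    (hbip : ∀ v, IsSource D v ∨ IsSink D v) {U : Finset α} (hU : NoArcEnters D U) :
    ∑ t ∈ U with IsSink D t, b t ≤ ∑ s ∈ U with IsSource D s, b s := by
  have hin : ∀ t ∈ U, ∑ u, x u t = ∑ s ∈ U with IsSource D s, x s t := by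
    intro t ht
    refine (sum_subset (subset_univ _) fun s _ hs => ?_).symm
    by_contra hst
    have hD : D s t := by_contra fun h => hst (hx.1 s t h)
    exact hs (mem_filter.mpr ⟨by_contra fun hsU => hU s hsU t ht hD, isSource_of_adj hbip hD⟩)
  calc ∑ t ∈ U with IsSink D t, b t
      = ∑ t ∈ U with IsSink D t, ∑ s ∈ U with IsSource D s, x s t :=
        sum_congr rfl fun t ht => by
          rw [hx.eq_sum_in (mem_filter.mp ht).2, hin t (mem_filter.mp ht).1]
    _ = ∑ s ∈ U with IsSource D s, ∑ t ∈ U with IsSink D t, x s t := sum_comm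
    _ ≤ ∑ s ∈ U with IsSource D s, ∑ t, x s t :=
        sum_le_sum fun s _ => sum_le_sum_of_subset (subset_univ _)
    _ = ∑ s ∈ U with IsSource D s, b s :=
        sum_congr rfl fun s hs => (hx.eq_sum_out (mem_filter.mp hs).2).symm

lemma sum_sources_eq_sum_sinks (hx : IsPerfectBMatching D b x)
    (hbip : ∀ v, IsSource D v ∨ IsSink D v) :
    ∑ s with IsSource D s, b s = ∑ t with IsSink D t, b t :=
  le_antisymm (hx.reverse.sum_sinks_le_sum_sources (fun v => (hbip v).symm) noArcEnters_univ)
    (hx.sum_sinks_le_sum_sources hbip noArcEnters_univ)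

end IsPerfectBMatching

variable [Fintype α] {D : α → α → Prop} [DecidableRel D] {b : α → ℕ}

lemma sum_sinks_le_sum_sources_of_noArcEnters [DecidableEq α]
    (heq : ∑ s with IsSource D s, b s = ∑ t with IsSink D t, b t)
    (hcut : ∀ U, IsDicutShore D U →
      ∑ t ∈ U with IsSink D t, b t ≤ ∑ s ∈ U with IsSource D s, b s)
    {U : Finset α} (hU : NoArcEnters D U) :
    ∑ t ∈ U with IsSink D t, b t ≤ ∑ s ∈ U with IsSource D s, b s := by
  rcases U.eq_empty_or_nonempty with rfl | hne
  · simp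
  by_cases huniv : U = univ
  · subst huniv
    exact heq.ge
  · exact hcut U ⟨hne, huniv, hU⟩

theorem exists_isPerfectBMatching [DecidableEq α] (hbip : ∀ v, IsSource D v ∨ IsSink D v)
    (hdeg : ∀ v, ∃ u, D u v ∨ D v u)
    (heq : ∑ s with IsSource D s, b s = ∑ t with IsSink D t, b t)
    (hcut : ∀ U, NoArcEnters D U →
      ∑ t ∈ U with IsSink D t, b t ≤ ∑ s ∈ U with IsSource D s, b s) :
    ∃ x, IsPerfectBMatching D b x := by
  let a (v : α) : ℕ := if IsSource D v then b v else 0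
  let c (v : α) : ℕ := if IsSink D v then b v else 0
  have hall (B : Finset α) : ∑ j ∈ B, c j ≤ ∑ i with ∃ j ∈ B, D i j, a i := by
    let N : Finset α := {i | ∃ j ∈ B, D i j}
    have hN : ∀ i ∈ N, IsSource D i := by
      intro i hi
      obtain ⟨j, -, hij⟩ := (mem_filter.mp hi).2
      exact isSource_of_adj hbip hij
    let U := {t ∈ B | IsSink D t} ∪ N
    have hU : NoArcEnters D U := by
      intro v hv u hu hvu
      rcases mem_union.mp hu with hu | hu
      · exact hv (mem_union_right _ (mem_filter.mpr ⟨mem_univ v, u, (mem_filter.mp hu).1, hvu⟩))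
      · exact hN u hu v hvu
    calc ∑ j ∈ B, c j ≤ ∑ j ∈ U, c j := sum_le_sum_of_ne_zero fun j hj hcj =>
          mem_union_left _ (mem_filter.mpr ⟨hj, by_contra fun h => hcj (if_neg h)⟩)
      _ = ∑ t ∈ U with IsSink D t, b t := (sum_filter _ _).symm
      _ ≤ ∑ s ∈ U with IsSource D s, b s := hcut U hU
      _ = ∑ i ∈ U, a i := sum_filter _ _
      _ ≤ ∑ i ∈ N, a i := sum_le_sum_of_ne_zero fun i hi hai => by
          have hsrc : IsSource D i := by_contra fun h => hai (if_neg h)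
          rcases mem_union.mp hi with hi | hi
          · exact absurd (mem_filter.mp hi).2 (not_isSink_of_isSource hdeg hsrc)
          · exact hi
  obtain ⟨x, hxD, hxa, hxc⟩ :=
    exists_transportation D a c (by simpa only [a, c, sum_filter] using heq) hall
  refine ⟨x, hxD, fun v => ?_⟩
  rw [sum_add_distrib, hxc, hxa]
  dsimp only [a, c]
  rcases hbip v with h | h
  · rw [if_neg (not_isSink_of_isSource hdeg h), if_pos h, zero_add]
  · rw [if_pos h, if_neg fun h' => not_isSink_of_isSource hdeg h' h, add_zero]

end BipartiteDigraph

theorem stmt_8_general (D : V → V → Prop) [DecidableRel D]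
    (hbip : ∀ v : V, (∀ u, ¬ D u v) ∨ (∀ u, ¬ D v u))
    (hdeg : ∀ v : V, ∃ u, D u v ∨ D v u)
    (b : V → ℕ) :
    (∃ x : V → V → ℕ, (∀ u v, ¬ D u v → x u v = 0) ∧
        ∀ v : V, ∑ u, (x u v + x v u) = b v) ↔
      ((∑ s ∈ Finset.univ.filter fun v => ∀ u, ¬ D u v, b s)
          = (∑ t ∈ Finset.univ.filter fun v => ∀ u, ¬ D v u, b t) ∧
        ∀ U : Finset V, IsDicutShore D U →
          (∑ t ∈ U.filter fun v => ∀ u, ¬ D v u, b t)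
            ≤ (∑ s ∈ U.filter fun v => ∀ u, ¬ D u v, b s)) := by
  refine ⟨fun ⟨x, hx⟩ => ⟨?_, fun U hU => ?_⟩, fun ⟨heq, hcut⟩ => ?_⟩
  · exact IsPerfectBMatching.sum_sources_eq_sum_sinks hx hbip
  · exact IsPerfectBMatching.sum_sinks_le_sum_sources hx hbip hU.2.2
  · exact exists_isPerfectBMatching hbip hdeg heq fun U hU =>
      sum_sinks_le_sum_sources_of_noArcEnters heq hcut hU

/-- Characterization of the existence of a perfect `b`-matching in a bipartite digraph
in terms of dicuts. -/
theorem stmt_8 [Nonempty V] (D : V → V → Prop) [DecidableRel D]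
    (hirr : ∀ v, ¬ D v v)
    (hbip : ∀ v : V, (∀ u, ¬ D u v) ∨ (∀ u, ¬ D v u))
    (hdeg : ∀ v : V, ∃ u, D u v ∨ D v u)
    (b : V → ℕ) :
    (∃ x : V → V → ℕ, (∀ u v, ¬ D u v → x u v = 0) ∧
        ∀ v : V, ∑ u, (x u v + x v u) = b v) ↔
      ((∑ s ∈ Finset.univ.filter fun v => ∀ u, ¬ D u v, b s)
          = (∑ t ∈ Finset.univ.filter fun v => ∀ u, ¬ D v u, b t) ∧
        ∀ U : Finset V, IsDicutShore D U →
          (∑ t ∈ U.filter fun v => ∀ u, ¬ D v u, b t)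
            ≤ (∑ s ∈ U.filter fun v => ∀ u, ¬ D u v, b s)) :=
  stmt_8_general D hbip hdeg b
end

section
/- Let τ ≥ 2, let (V, D, w) be a sink-regular weighted (τ,τ+1)-bipartite digraph, let k ≥ 1, and let Q₁, …, Q_k be pairwise disjoint M₁-bases contained in a(V). Define b : V → ℕ by b v := k + |{i : v ∈ Q_i}|. If J : V → V → ℕ satisfies J u v = 0 whenever ¬ D u v, and ∑_u (J u v + J v u) = b v for every vertex v, then ∑_{u ∈ U, v ∉ U} J u v ≥ k for every dicut shore U (i.e. J is a k-dijoin). -/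
open Finset

variable {V : Type*} [Fintype V] [DecidableEq V]

/-- `Q` is an `M₁`-basis: a subset of the active vertices of size `disc(V)` meeting
every dicut shore `U` in at least `1 + disc(U)` vertices. -/
def IsM1Basis (D : V → V → Prop) [DecidableRel D] (w : V → V → ℕ) (τ : ℕ)
    (Q : Finset V) : Prop :=
  Q ⊆ activeFinset w τ ∧ ((Q.card : ℤ) = disc D Finset.univ) ∧
  ∀ U : Finset V, IsDicutShore D U → 1 + disc D U ≤ ((Q ∩ U).card : ℤ)

/-- A perfect `b`-matching for `b = k·1 + ∑ χ_{Qᵢ}`, where `Q₁,…,Q_k` are disjoint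
`M₁`-bases, is a `k`-dijoin. -/
theorem stmt_9 [Nonempty V] (D : V → V → Prop) [DecidableRel D] (w : V → V → ℕ)
    (τ : ℕ) (hτ : 2 ≤ τ) (h : SinkRegularBipartite D w τ)
    (k : ℕ) (hk : 1 ≤ k) (Q : Fin k → Finset V)
    (hdisj : ∀ i j, i ≠ j → Disjoint (Q i) (Q j))
    (hbasis : ∀ i, IsM1Basis D w τ (Q i))
    (J : V → V → ℕ) (hJsupp : ∀ u v, ¬ D u v → J u v = 0)
    (hJdeg : ∀ v : V, ∑ u, (J u v + J v u)
      = k + (Finset.univ.filter fun i : Fin k => v ∈ Q i).card) :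
    ∀ U : Finset V, IsDicutShore D U → k ≤ cutWeight J U := by
  classical
  obtain ⟨hirr, hwsupp, hss, hsrc, hsink, hcut⟩ := h
  intro U hU
  obtain ⟨hUne, hUuniv, hUno⟩ := hU
  set T := U.filter (fun v => ∀ u, ¬ D v u) with hTdef
  set S := U.filter (fun v => ∀ u, ¬ D u v) with hSdef
  -- no vertex is both a source and a sink
  have hnb : ∀ v : V, (∀ u, ¬ D u v) → (∀ u, ¬ D v u) → False := by
    intro v h1 h2
    have h0 : wdeg w v = 0 :=
      Finset.sum_eq_zero fun u _ => by rw [hwsupp u v (h1 u), hwsupp v u (h2 u)]; rfl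
    have := hsink v h2
    omega
  -- members of each basis are sources
  have hQsrc : ∀ i, ∀ v ∈ Q i, ∀ u, ¬ D u v := by
    intro i v hv
    have hA := (hbasis i).1 hv
    simp only [activeFinset, Finset.mem_filter] at hA
    rcases hss v with h1 | h1
    · exact h1
    · have := hsink v h1; omega
  -- sinks in U receive everything from inside U, and have demand exactly k
  have hsinkdeg : ∀ v ∈ T, ∑ u ∈ U, J u v = k := by
    intro v hv
    rw [hTdef, Finset.mem_filter] at hv
    obtain ⟨hvU, hvsink⟩ := hv
    have h1 : ∑ u ∈ U, J u v = ∑ u, J u v := by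
      rw [← Finset.sum_add_sum_compl U (fun u => J u v)]
      have : ∑ u ∈ Uᶜ, J u v = 0 :=
        Finset.sum_eq_zero fun u hu =>
          hJsupp u v (hUno u (by simpa using hu) v hvU)
      omega
    have h2 : ∑ u, (J u v + J v u) = ∑ u, J u v := by
      apply Finset.sum_congr rfl
      intro u _
      rw [hJsupp v u (hvsink u)]
      rfl
    have h3 : (Finset.univ.filter fun i : Fin k => v ∈ Q i) = ∅ := by
      apply Finset.filter_false_of_mem
      intro i _ hvi
      exact hnb v (hQsrc i v hvi) hvsink
    have := hJdeg v
    rw [h3, h2] at this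
    simp at this
    omega
  -- internal weight equals k * #sinks in U
  have hA : ∑ v ∈ U, ∑ u ∈ U, J u v = k * T.card := by
    have : ∑ v ∈ U, ∑ u ∈ U, J u v = ∑ v ∈ T, ∑ u ∈ U, J u v := by
      rw [eq_comm]
      apply Finset.sum_subset (Finset.filter_subset _ _)
      intro v hvU hvT
      simp only [Finset.mem_filter, not_and] at hvT
      have hvsrc : ∀ u, ¬ D u v := by
        rcases hss v with h1 | h1
        · exact h1
        · exact absurd h1 (hvT hvU)
      exact Finset.sum_eq_zero fun u _ => hJsupp u v (hvsrc u)
    rw [this, Finset.sum_congr rfl hsinkdeg]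
    simp [mul_comm]
  -- the key counting identity
  have key : ∑ v ∈ U, (k + (Finset.univ.filter fun i : Fin k => v ∈ Q i).card)
      = 2 * (k * T.card) + cutWeight J U := by
    have e1 : ∀ v ∈ U, k + (Finset.univ.filter fun i : Fin k => v ∈ Q i).card
        = (∑ u ∈ U, J u v) + ((∑ u ∈ U, J v u) + ∑ u ∈ Uᶜ, J v u) := by
      intro v hv
      have h1 : ∑ u ∈ Uᶜ, J u v = 0 :=
        Finset.sum_eq_zero fun u hu =>
          hJsupp u v (hUno u (by simpa using hu) v hv)
      have h2 := hJdeg v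
      rw [Finset.sum_add_distrib,
        ← Finset.sum_add_sum_compl U (fun u => J u v),
        ← Finset.sum_add_sum_compl U (fun u => J v u), h1] at h2
      omega
    rw [Finset.sum_congr rfl e1, Finset.sum_add_distrib, Finset.sum_add_distrib,
      Finset.sum_comm (s := U) (t := U) (f := fun v u => J v u)]
    have : cutWeight J U = ∑ v ∈ U, ∑ u ∈ Uᶜ, J v u := rfl
    rw [hA, ← this]
    ring
  -- counting the left side of key
  have hswap : ∑ v ∈ U, (Finset.univ.filter fun i : Fin k => v ∈ Q i).card
      = ∑ i : Fin k, (Q i ∩ U).card := by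
    simp only [Finset.card_filter]
    rw [Finset.sum_comm]
    apply Finset.sum_congr rfl
    intro i _
    rw [Finset.inter_comm, ← Finset.filter_mem_eq_inter, Finset.card_filter]
  have hST : S.card + T.card = U.card := by
    rw [hSdef, hTdef]
    have : U.filter (fun v => ∀ u, ¬ D u v)
        = U.filter (fun v => ¬ ∀ u, ¬ D v u) := by
      apply Finset.filter_congr
      intro v _
      constructor
      · intro h1 h2
        exact hnb v h1 h2
      · intro h1
        rcases hss v with h2 | h2
        · exact h2
        · exact absurd h2 h1
    rw [this, add_comm]
    exact Finset.card_filter_add_card_filter_not (p := fun v => ∀ u, ¬ D v u)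
  -- the basis inequality
  have hbnd : (k : ℤ) * (1 + disc D U) ≤ ∑ i : Fin k, ((Q i ∩ U).card : ℤ) := by
    calc (k : ℤ) * (1 + disc D U) = ∑ _i : Fin k, (1 + disc D U) := by
          rw [Finset.sum_const, Finset.card_univ, Fintype.card_fin, nsmul_eq_mul]
      _ ≤ ∑ i : Fin k, ((Q i ∩ U).card : ℤ) :=
          Finset.sum_le_sum fun i _ => (hbasis i).2.2 U ⟨hUne, hUuniv, hUno⟩
  have hdisc : disc D U = (T.card : ℤ) - (S.card : ℤ) := rfl
  -- put everything together over ℤ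
  rw [Finset.sum_add_distrib, hswap, Finset.sum_const, smul_eq_mul] at key
  have key' := congrArg (fun n : ℕ => (n : ℤ)) key
  push_cast at key'
  rw [hdisc, mul_add, mul_one, mul_sub] at hbnd
  have hST' : (S.card : ℤ) + (T.card : ℤ) = (U.card : ℤ) := by exact_mod_cast hST
  have hfin : (k : ℤ) ≤ (cutWeight J U : ℤ) := by
    have hu : (U.card : ℤ) * k = (S.card : ℤ) * k + (T.card : ℤ) * k := by
      rw [← hST']; ring
    rw [hu] at key'
    nlinarith [hbnd, key']
  exact_mod_cast hfin
end

section
/- Let τ ≥ 2 and let (V, D, w) be a sink-regular weighted (τ,τ+1)-bipartite digraph. Suppose the family 𝒬 := {Q ⊆ V : |Q| = disc(V) and |Q ∩ U| ≥ 1 + disc(U) for every dicut shore U} is nonempty. Then there exists a matroid M on V (a Mathlib Matroid V with ground set the whole of V) whose bases are exactly the members of 𝒬. -/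
open Finset

variable {V : Type*} [Fintype V] [DecidableEq V]

/-!
Dicut shores form a crossing family and `U ↦ 1 + disc U` is modular, so `𝒬` consists of the
`k`-sets meeting every member `U` of a crossing family in at least `f U` elements, for a crossing
supermodular `f`; such a family satisfies the basis exchange axiom. Given `B₁, B₂ ∈ 𝒬` and
`x ∈ B₁ \ B₂`, uncrossing shows that two distinct minimal `B₁`-tight sets containing `x` cover the
ground set. Inclusion–exclusion over such pairwise covering sets gives `|B₁ ∩ T| ≤ |B₂ ∩ T|` for
their intersection `T ∋ x`, so `T` contains some `y ∈ B₂ \ B₁`; as `y` lies in every tight set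
through `x`, the set `B₁ - x + y` is again in `𝒬`.
-/

section CrossingFamily

variable {α : Type*}

def IsBoundedBase (𝒮 : Set (Finset α)) (f : Finset α → ℤ) (k : ℤ) (B : Set α) : Prop :=
  (B.ncard : ℤ) = k ∧ ∀ U ∈ 𝒮, f U ≤ ((B ∩ (U : Set α)).ncard : ℤ)

variable [DecidableEq α]

def MeetsBounds (𝒮 : Set (Finset α)) (f : Finset α → ℤ) (B : Finset α) : Prop :=
  ∀ U ∈ 𝒮, f U ≤ #(B ∩ U)

variable {𝒮 : Set (Finset α)} {f : Finset α → ℤ} {k : ℤ} {B B₁ B₂ X Y : Finset α} {x y : α}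

theorem card_inter_union_add_card_inter_inter (B X Y : Finset α) :
    #(B ∩ (X ∪ Y)) + #(B ∩ (X ∩ Y)) = #(B ∩ X) + #(B ∩ Y) := by
  rw [inter_union_distrib_left, inter_inter_distrib_left]
  exact card_union_add_card_inter _ _

@[simp]
theorem isBoundedBase_coe :
    IsBoundedBase 𝒮 f k (B : Set α) ↔ (#B : ℤ) = k ∧ MeetsBounds 𝒮 f B := by
  simp only [IsBoundedBase, MeetsBounds, ← coe_inter, Set.ncard_coe_finset]

theorem MeetsBounds.insert_erase (hB : MeetsBounds 𝒮 f B) (hy : y ∉ B)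
    (htight : ∀ U ∈ 𝒮, x ∈ U → (#(B ∩ U) : ℤ) = f U → y ∈ U) :
    MeetsBounds 𝒮 f (insert y (B.erase x)) := by
  intro U hU
  have hsub : (B ∩ U).erase x ⊆ insert y (B.erase x) ∩ U := fun a ha => by
    obtain ⟨hax, haB, haU⟩ := by simpa using ha
    simp [haU, haB, hax]
  have herase : #(B ∩ U) ≤ #((B ∩ U).erase x) + 1 := by
    have := pred_card_le_card_erase (s := B ∩ U) (a := x)
    omega
  have hBU := hB U hU
  by_cases hyU : y ∈ U
  · have hy' : y ∉ (B ∩ U).erase x := fun h => hy (mem_inter.1 (mem_of_mem_erase h)).1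
    have := card_le_card (insert_subset (mem_inter.2 ⟨mem_insert_self _ _, hyU⟩) hsub)
    rw [card_insert_of_notMem hy'] at this
    omega
  by_cases hxU : x ∈ U
  · have hnt : (#(B ∩ U) : ℤ) ≠ f U := fun ht => hyU (htight U hU hxU ht)
    have := card_le_card hsub
    omega
  · have := card_le_card hsub
    rw [erase_eq_of_notMem fun h => hxU (mem_inter.1 h).2] at this
    omega

variable [Fintype α]

def IsCrossingFamily (𝒮 : Set (Finset α)) : Prop :=
  ∀ ⦃X⦄, X ∈ 𝒮 → ∀ ⦃Y⦄, Y ∈ 𝒮 → (X ∩ Y).Nonempty → X ∪ Y ≠ univ → X ∩ Y ∈ 𝒮 ∧ X ∪ Y ∈ 𝒮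

def IsCrossingSupermodular (𝒮 : Set (Finset α)) (f : Finset α → ℤ) : Prop :=
  ∀ ⦃X⦄, X ∈ 𝒮 → ∀ ⦃Y⦄, Y ∈ 𝒮 → (X ∩ Y).Nonempty → X ∪ Y ≠ univ →
    f X + f Y ≤ f (X ∪ Y) + f (X ∩ Y)

theorem card_inter_inf_le_of_pairwise_union_eq_univ (hcard : #B₁ = #B₂)
    {S : Finset (Finset α)} (hS : (S : Set (Finset α)).Pairwise fun A A' => A ∪ A' = univ)
    (hle : ∀ A ∈ S, #(B₁ ∩ A) ≤ #(B₂ ∩ A)) :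
    #(B₁ ∩ S.inf id) ≤ #(B₂ ∩ S.inf id) := by
  induction S using Finset.induction_on with
  | empty => simpa using hcard.le
  | @insert A S hAS ih =>
    rw [coe_insert, Set.pairwise_insert] at hS
    set T := S.inf id
    have hAT : A ∪ T = univ := by
      refine eq_univ_of_forall fun v => mem_union.2 <| or_iff_not_imp_left.2 fun hvA => ?_
      refine mem_inf.2 fun W hW => ?_
      have hWA := (hS.2 W hW fun h => hAS (h ▸ hW)).2
      exact (mem_union.1 (hWA ▸ mem_univ v)).resolve_right hvA
    have h₁ := card_inter_union_add_card_inter_inter B₁ A T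
    have h₂ := card_inter_union_add_card_inter_inter B₂ A T
    have hA := hle A (mem_insert_self A S)
    have hT := ih hS.1 fun A' hA' => hle A' (mem_insert_of_mem hA')
    rw [hAT, inter_univ] at h₁ h₂
    rw [inf_insert]
    change #(B₁ ∩ (A ∩ T)) ≤ #(B₂ ∩ (A ∩ T))
    omega

theorem MeetsBounds.tight_inter (hB : MeetsBounds 𝒮 f B) (h𝒮 : IsCrossingFamily 𝒮)
    (hf : IsCrossingSupermodular 𝒮 f) (hX : X ∈ 𝒮) (hY : Y ∈ 𝒮) (hXY : (X ∩ Y).Nonempty)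
    (hXY' : X ∪ Y ≠ univ) (htX : (#(B ∩ X) : ℤ) = f X) (htY : (#(B ∩ Y) : ℤ) = f Y) :
    X ∩ Y ∈ 𝒮 ∧ (#(B ∩ (X ∩ Y)) : ℤ) = f (X ∩ Y) := by
  obtain ⟨hinter, hunion⟩ := h𝒮 hX hY hXY hXY'
  have hmod : (#(B ∩ (X ∪ Y)) : ℤ) + #(B ∩ (X ∩ Y)) = #(B ∩ X) + #(B ∩ Y) := by
    exact_mod_cast card_inter_union_add_card_inter_inter B X Y
  have := hf hX hY hXY hXY'
  have := hB _ hunion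
  have := hB _ hinter
  exact ⟨hinter, by omega⟩

theorem MeetsBounds.exists_mem_forall_tight (h𝒮 : IsCrossingFamily 𝒮)
    (hf : IsCrossingSupermodular 𝒮 f) (h₁ : MeetsBounds 𝒮 f B₁) (h₂ : MeetsBounds 𝒮 f B₂)
    (hcard : #B₁ = #B₂) (hx₁ : x ∈ B₁) (hx₂ : x ∉ B₂) :
    ∃ y ∈ B₂, y ∉ B₁ ∧ ∀ U ∈ 𝒮, x ∈ U → (#(B₁ ∩ U) : ℤ) = f U → y ∈ U := by
  classical
  set IsTight : Finset α → Prop := fun U => U ∈ 𝒮 ∧ x ∈ U ∧ (#(B₁ ∩ U) : ℤ) = f U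
  set M : Finset (Finset α) := univ.filter (Minimal IsTight)
  set T := M.inf id
  have hTU : ∀ U, IsTight U → T ⊆ U := fun U hU => by
    obtain ⟨A, hAU, hA⟩ := exists_minimal_le_of_wellFoundedLT IsTight U hU
    exact (inf_le (f := id) (mem_filter.2 ⟨mem_univ A, hA⟩)).trans hAU
  have hcover : (M : Set (Finset α)).Pairwise fun A A' => A ∪ A' = univ := by
    intro A hA A' hA' hne
    simp only [M, coe_filter, mem_univ, true_and] at hA hA'
    by_contra hAA'
    obtain ⟨hAS, hxA, htA⟩ := hA.prop
    obtain ⟨hA'S, hxA', htA'⟩ := hA'.prop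
    have hxAA' : x ∈ A ∩ A' := mem_inter.2 ⟨hxA, hxA'⟩
    obtain ⟨hS, ht⟩ := h₁.tight_inter h𝒮 hf hAS hA'S ⟨x, hxAA'⟩ hAA' htA htA'
    exact hne <| le_antisymm (hA.le_of_le ⟨hS, hxAA', ht⟩ inter_subset_left |>.trans
      inter_subset_right) (hA'.le_of_le ⟨hS, hxAA', ht⟩ inter_subset_right |>.trans
      inter_subset_left)
  have hxT : x ∈ T := mem_inf.2 fun A hA => ((mem_filter.1 hA).2.prop).2.1
  have hT : #(B₁ ∩ T) ≤ #(B₂ ∩ T) :=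
    card_inter_inf_le_of_pairwise_union_eq_univ hcard hcover fun A hA => by
      obtain ⟨hAS, -, htA⟩ := (mem_filter.1 hA).2.prop
      have := h₂ A hAS
      omega
  have hlt : #((B₁ ∩ T).erase x) < #(B₂ ∩ T) := by
    rw [card_erase_of_mem (mem_inter.2 ⟨hx₁, hxT⟩)]
    have : 0 < #(B₁ ∩ T) := card_pos.2 ⟨x, mem_inter.2 ⟨hx₁, hxT⟩⟩
    omega
  obtain ⟨y, hy, hyx⟩ := exists_mem_notMem_of_card_lt_card hlt
  obtain ⟨hy₂, hyT⟩ := mem_inter.1 hy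
  have hy₁ : y ∉ B₁ := fun hy₁ =>
    hyx (mem_erase.2 ⟨ne_of_mem_of_not_mem hy₂ hx₂, mem_inter.2 ⟨hy₁, hyT⟩⟩)
  exact ⟨y, hy₂, hy₁, fun U hU hxU htU => hTU U ⟨hU, hxU, htU⟩ hyT⟩

theorem exchangeProperty_isBoundedBase (h𝒮 : IsCrossingFamily 𝒮)
    (hf : IsCrossingSupermodular 𝒮 f) : Matroid.ExchangeProperty (IsBoundedBase 𝒮 f k) := by
  intro X Y hX hY a ha
  lift X to Finset α using X.toFinite
  lift Y to Finset α using Y.toFinite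
  rw [isBoundedBase_coe] at hX hY
  rw [← coe_sdiff, mem_coe, mem_sdiff] at ha
  obtain ⟨b, hbY, hbX, htight⟩ :=
    hX.2.exists_mem_forall_tight h𝒮 hf hY.2 (by omega) ha.1 ha.2
  refine ⟨b, by simp [hbY, hbX], ?_⟩
  rw [← coe_erase, ← coe_insert, isBoundedBase_coe,
    card_insert_of_notMem fun h => hbX (mem_of_mem_erase h), card_erase_add_one ha.1]
  exact ⟨hX.1, hX.2.insert_erase hbX htight⟩

theorem exists_matroid_isBase_iff_isBoundedBase (h𝒮 : IsCrossingFamily 𝒮)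
    (hf : IsCrossingSupermodular 𝒮 f) (hne : ∃ Q, IsBoundedBase 𝒮 f k Q) :
    ∃ M : Matroid α, M.E = Set.univ ∧ ∀ B, M.IsBase B ↔ IsBoundedBase 𝒮 f k B :=
  ⟨Matroid.ofIsBaseOfFinite Set.finite_univ _ hne (exchangeProperty_isBoundedBase h𝒮 hf)
    fun _ _ => Set.subset_univ _, rfl, fun _ => Iff.rfl⟩

end CrossingFamily

section Dicut

variable (D : V → V → Prop) {U U' : Finset V}

theorem IsDicutShore.inter (hU : IsDicutShore D U) (hU' : IsDicutShore D U')
    (hne : (U ∩ U').Nonempty) : IsDicutShore D (U ∩ U') := by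
  refine ⟨hne, fun h => hU.2.1 (univ_subset_iff.1 (h ▸ inter_subset_left)), ?_⟩
  intro v hv u hu
  rw [mem_inter] at hv hu
  by_cases hvU : v ∈ U
  · exact hU'.2.2 v (fun h => hv ⟨hvU, h⟩) u hu.2
  · exact hU.2.2 v hvU u hu.1

theorem IsDicutShore.union (hU : IsDicutShore D U) (hU' : IsDicutShore D U')
    (hne : U ∪ U' ≠ univ) : IsDicutShore D (U ∪ U') := by
  refine ⟨hU.1.mono subset_union_left, hne, ?_⟩
  intro v hv u hu
  rw [mem_union, not_or] at hv
  rcases mem_union.1 hu with hu | hu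
  · exact hU.2.2 v hv.1 u hu
  · exact hU'.2.2 v hv.2 u hu

theorem isCrossingFamily_isDicutShore : IsCrossingFamily {U | IsDicutShore D U} :=
  fun _ hX _ hY hXY hXY' => ⟨hX.inter D hY hXY, hX.union D hY hXY'⟩

theorem disc_union_add_disc_inter [DecidableRel D] (X Y : Finset V) :
    disc D (X ∪ Y) + disc D (X ∩ Y) = disc D X + disc D Y := by
  have hfilter : ∀ (p : V → Prop) [DecidablePred p],
      #((X ∪ Y).filter p) + #((X ∩ Y).filter p) = #(X.filter p) + #(Y.filter p) := by
    intro p _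
    rw [filter_union, filter_inter_distrib]
    exact card_union_add_card_inter _ _
  have hsinks := hfilter fun v => ∀ u, ¬ D v u
  have hsources := hfilter fun v => ∀ u, ¬ D u v
  simp only [disc]
  omega

end Dicut

theorem stmt_10_general (D : V → V → Prop) [DecidableRel D]
    (hne : ∃ Q : Set V, (Q.ncard : ℤ) = disc D Finset.univ ∧
      ∀ U : Finset V, IsDicutShore D U →
        1 + disc D U ≤ (((Q ∩ (U : Set V)).ncard : ℤ))) :
    ∃ M : Matroid V, M.E = Set.univ ∧
      ∀ B : Set V, M.IsBase B ↔
        ((B.ncard : ℤ) = disc D Finset.univ ∧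
          ∀ U : Finset V, IsDicutShore D U →
            1 + disc D U ≤ (((B ∩ (U : Set V)).ncard : ℤ))) :=
  exists_matroid_isBase_iff_isBoundedBase (isCrossingFamily_isDicutShore D)
    (fun X _ Y _ _ _ => by linarith [disc_union_add_disc_inter D X Y]) hne

/-- If the family `𝒬 = {Q ⊆ V : |Q| = disc(V), |Q ∩ U| ≥ 1 + disc(U) for every dicut
shore U}` is nonempty, then it is the set of bases of a matroid on `V`. -/
theorem stmt_10 [Nonempty V] (D : V → V → Prop) [DecidableRel D] (w : V → V → ℕ)
    (τ : ℕ) (hτ : 2 ≤ τ) (h : SinkRegularBipartite D w τ)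
    (hne : ∃ Q : Set V, (Q.ncard : ℤ) = disc D Finset.univ ∧
      ∀ U : Finset V, IsDicutShore D U →
        1 + disc D U ≤ (((Q ∩ (U : Set V)).ncard : ℤ))) :
    ∃ M : Matroid V, M.E = Set.univ ∧
      ∀ B : Set V, M.IsBase B ↔
        ((B.ncard : ℤ) = disc D Finset.univ ∧
          ∀ U : Finset V, IsDicutShore D U →
            1 + disc D U ≤ (((B ∩ (U : Set V)).ncard : ℤ))) :=
  stmt_10_general D hne
end

section
/- Let τ ≥ 2, let (V, D, w) be a sink-regular weighted (τ,τ+1)-bipartite digraph, and let Q ⊆ a(V). Then Q is bimatchable if and only if |Q| = disc(V) and |Q ∩ U| ≥ disc(U) for every set U with ∅ ≠ U ≠ V such that w v u = 0 whenever v ∉ U and u ∈ U (i.e. for every dicut shore of the digraph formed by the positive-weight arcs). -/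
open Finset

set_option linter.unusedSectionVars false
set_option linter.unusedTactic false

variable {V : Type*} [Fintype V] [DecidableEq V]

/-- `Q` is bimatchable in `(D,w)`: it is the set of dyad centers of some rounded
`1`-factor. -/
def Bimatchable (w : V → V → ℕ) (τ : ℕ) (Q : Finset V) : Prop :=
  ∃ J : V → V → ℕ, IsRounded1Factor w τ J ∧ dyadCenters J = Q


private lemma Jdeg_split (J : V → V → ℕ) (v : V) :
    Jdeg J v = (∑ u, J u v) + ∑ u, J v u := by
  simpa [Jdeg] using Finset.sum_add_distrib

private lemma sum_ite_Q (s Q : Finset V) :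
    ∑ u ∈ s, (if u ∈ Q then (2:ℕ) else 1) = s.card + (s ∩ Q).card := by
  have h1 : ∀ u ∈ s, (if u ∈ Q then (2:ℕ) else 1) = 1 + if u ∈ Q then 1 else 0 := by
    intro u _; split <;> rfl
  rw [Finset.sum_congr rfl h1, Finset.sum_add_distrib, Finset.sum_boole]
  simp [Finset.filter_mem_eq_inter]

private lemma snk_iff_not_src {D : V → V → Prop} [DecidableRel D] {w : V → V → ℕ} {τ : ℕ}
    (hτ : 2 ≤ τ) (h : SinkRegularBipartite D w τ) (v : V) :
    (∀ u, ¬ D v u) ↔ ¬ (∀ u, ¬ D u v) := by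
  constructor
  · intro hsnk hsrc
    have h1 : wdeg w v = τ := h.2.2.2.2.1 v hsnk
    have h0 : wdeg w v = 0 := by
      apply Finset.sum_eq_zero
      intro u _
      simp [h.2.1 u v (hsrc u), h.2.1 v u (hsnk u)]
    omega
  · intro hns
    rcases h.2.2.1 v with hs | hk
    · exact absurd hs hns
    · exact hk

private lemma Q_subset_src {D : V → V → Prop} [DecidableRel D] {w : V → V → ℕ} {τ : ℕ}
    (hτ : 2 ≤ τ) (h : SinkRegularBipartite D w τ) {Q : Finset V}
    (hQ : Q ⊆ activeFinset w τ) : ∀ v ∈ Q, ∀ u, ¬ D u v := by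
  intro v hv
  have ha : wdeg w v = τ + 1 := by
    have := hQ hv; simpa [activeFinset] using this
  by_contra hns
  have hk : ∀ u, ¬ D v u := ((snk_iff_not_src hτ h v)).mpr hns
  have := h.2.2.2.2.1 v hk
  omega

private lemma forward_dir {D : V → V → Prop} [DecidableRel D] {w : V → V → ℕ} {τ : ℕ}
    (hτ : 2 ≤ τ) (h : SinkRegularBipartite D w τ) {Q : Finset V}
    (hQ : Q ⊆ activeFinset w τ) (hb : Bimatchable w τ Q) :
    ((Q.card : ℤ) = disc D Finset.univ ∧
        ∀ U : Finset V, (U.Nonempty ∧ U ≠ Finset.univ ∧ ∀ v ∉ U, ∀ u ∈ U, w v u = 0) →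
          disc D U ≤ ((Q ∩ U).card : ℤ)) := by
  obtain ⟨J, hJ, hdc⟩ := hb
  set Sr : Finset V := univ.filter (fun v => ∀ u, ¬ D u v) with hSr
  set Tn : Finset V := univ.filter (fun v => ∀ u, ¬ D v u) with hTn
  have hQSr : Q ⊆ Sr := fun v hv => by
    simp only [hSr, mem_filter, mem_univ, true_and]
    exact Q_subset_src hτ h hQ v hv
  have hpart : ∀ v, v ∉ Sr → v ∈ Tn := by
    intro v hv
    simp only [hSr, mem_filter, mem_univ, true_and] at hv
    simp only [hTn, mem_filter, mem_univ, true_and]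
    exact (snk_iff_not_src hτ h v).mpr hv
  have hdisj : ∀ v, v ∈ Tn → v ∉ Sr := by
    intro v hv
    simp only [hTn, mem_filter, mem_univ, true_and] at hv
    simp only [hSr, mem_filter, mem_univ, true_and]
    exact (snk_iff_not_src hτ h v).mp hv
  -- J vanishes into sources and out of sinks
  have hJsrc0 : ∀ v ∈ Sr, ∀ u, J u v = 0 := by
    intro v hv u
    simp only [hSr, mem_filter, mem_univ, true_and] at hv
    have := hJ.1 u v
    rw [h.2.1 u v (hv u)] at this
    omega
  have hJsnk0 : ∀ v ∈ Tn, ∀ u, J v u = 0 := by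
    intro v hv u
    simp only [hTn, mem_filter, mem_univ, true_and] at hv
    have := hJ.1 v u
    rw [h.2.1 v u (hv u)] at this
    omega
  -- J-degrees
  have hJd : ∀ v, Jdeg J v = if v ∈ Q then 2 else 1 := by
    intro v
    have hQiff : v ∈ Q ↔ Jdeg J v = 2 := by
      rw [← hdc]; simp [dyadCenters]
    split
    · exact hQiff.mp ‹_›
    · rename_i hvQ
      have h2 : Jdeg J v ≠ 2 := fun hc => hvQ (hQiff.mpr hc)
      by_cases ha : wdeg w v = τ + 1
      · rcases hJ.2.2 v ha with h1 | h1
        · exact h1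
        · exact absurd h1 h2
      · exact hJ.2.1 v ha
  -- degree of a sink is its in-degree; of a source its out-degree
  have hdT : ∀ v ∈ Tn, (∑ u, J u v) = Jdeg J v := by
    intro v hv
    rw [Jdeg_split, Finset.sum_eq_zero (fun u _ => hJsnk0 v hv u), add_zero]
  have hdS : ∀ v ∈ Sr, (∑ u, J v u) = Jdeg J v := by
    intro v hv
    rw [Jdeg_split, Finset.sum_eq_zero (fun u _ => hJsrc0 v hv u), zero_add]
  have hTQ : ∀ s : Finset V, (s ∩ Tn) ∩ Q = ∅ := by
    intro s
    ext x
    simp only [mem_inter, notMem_empty, iff_false, not_and, and_imp]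
    intro _ hx hxQ
    exact hdisj x hx (hQSr hxQ)
  -- the key counting inequality, for U satisfying the no-entering condition
  have key : ∀ U : Finset V, (∀ v ∉ U, ∀ u ∈ U, w v u = 0) →
      (U ∩ Tn).card ≤ (U ∩ Sr).card + (U ∩ Sr ∩ Q).card := by
    intro U hU
    have e1 : ∑ v ∈ U ∩ Tn, Jdeg J v = (U ∩ Tn).card := by
      rw [Finset.sum_congr rfl (fun v _ => hJd v), sum_ite_Q, hTQ U]
      simp
    have e2 : ∀ v ∈ U ∩ Tn, (∑ u ∈ U ∩ Sr, J u v) = Jdeg J v := by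
      intro v hv
      rw [← hdT v (mem_inter.mp hv).2]
      apply Finset.sum_subset (Finset.subset_univ _)
      intro u _ hu
      by_cases huU : u ∈ U
      · have huS : u ∉ Sr := fun hS => hu (mem_inter.mpr ⟨huU, hS⟩)
        exact hJsnk0 u (hpart u huS) v
      · have hw0 : w u v = 0 := hU u huU v (mem_inter.mp hv).1
        have := hJ.1 u v
        omega
    have e3 : (U ∩ Tn).card = ∑ u ∈ U ∩ Sr, ∑ v ∈ U ∩ Tn, J u v := by
      rw [← e1, Finset.sum_congr rfl (fun v hv => (e2 v hv).symm), Finset.sum_comm]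
    have e4 : ∑ u ∈ U ∩ Sr, ∑ v ∈ U ∩ Tn, J u v ≤ ∑ u ∈ U ∩ Sr, Jdeg J u := by
      apply Finset.sum_le_sum
      intro u hu
      rw [← hdS u (mem_inter.mp hu).2]
      exact Finset.sum_le_sum_of_subset (Finset.subset_univ _)
    have e5 : ∑ u ∈ U ∩ Sr, Jdeg J u = (U ∩ Sr).card + (U ∩ Sr ∩ Q).card := by
      rw [Finset.sum_congr rfl (fun v _ => hJd v), sum_ite_Q]
    omega
  constructor
  · -- cardinality at univ
    have h1 := key univ (by intro v hv; exact absurd (mem_univ v) hv)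
    -- reverse inequality
    have e1 : ∑ v ∈ Tn, Jdeg J v = Tn.card := by
      rw [Finset.sum_congr rfl (fun v _ => hJd v), sum_ite_Q]
      have : Tn ∩ Q = ∅ := by
        have := hTQ univ; rwa [univ_inter] at this
      rw [this]; simp
    have e2 : ∑ v ∈ Tn, Jdeg J v = ∑ v, ∑ u, J u v := by
      rw [Finset.sum_congr rfl (fun v hv => (hdT v hv).symm)]
      apply Finset.sum_subset (Finset.subset_univ _)
      intro v _ hv
      have hvS : v ∈ Sr := by
        by_contra hvS
        exact hv (hpart v hvS)
      exact Finset.sum_eq_zero (fun u _ => hJsrc0 v hvS u)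
    have e3 : ∑ v ∈ Sr, Jdeg J v = ∑ u, ∑ v, J u v := by
      rw [Finset.sum_congr rfl (fun v hv => (hdS v hv).symm)]
      apply Finset.sum_subset (Finset.subset_univ _)
      intro v _ hv
      exact Finset.sum_eq_zero (fun u _ => hJsnk0 v (hpart v hv) u)
    have e4 : ∑ v ∈ Sr, Jdeg J v = Sr.card + Q.card := by
      rw [Finset.sum_congr rfl (fun v _ => hJd v), sum_ite_Q]
      rw [Finset.inter_eq_right.mpr hQSr]
    have e5 : Tn.card = Sr.card + Q.card := by
      rw [← e1, e2, Finset.sum_comm, ← e3, e4]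
    have hd : disc D univ = (Tn.card : ℤ) - (Sr.card : ℤ) := by
      simp only [disc, hTn, hSr]
    rw [hd]
    omega
  · intro U ⟨hUne, hUuniv, hU⟩
    have h1 := key U hU
    have hd : disc D U = ((U ∩ Tn).card : ℤ) - ((U ∩ Sr).card : ℤ) := by
      have hT' : U.filter (fun v => ∀ u, ¬ D v u) = U ∩ Tn := by
        ext x; simp [hTn, mem_filter, mem_inter]
      have hS' : U.filter (fun v => ∀ u, ¬ D u v) = U ∩ Sr := by
        ext x; simp [hSr, mem_filter, mem_inter]
      simp only [disc, hT', hS']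
    have h2 : (U ∩ Sr ∩ Q).card ≤ (Q ∩ U).card := by
      apply Finset.card_le_card
      intro x hx
      simp only [mem_inter] at hx ⊢
      exact ⟨hx.2, hx.1.1⟩
    rw [hd]
    push_cast
    omega

private lemma backward_dir {D : V → V → Prop} [DecidableRel D] {w : V → V → ℕ} {τ : ℕ}
    (hτ : 2 ≤ τ) (h : SinkRegularBipartite D w τ) {Q : Finset V}
    (hQ : Q ⊆ activeFinset w τ)
    (hcard : (Q.card : ℤ) = disc D Finset.univ)
    (hsh : ∀ U : Finset V, (U.Nonempty ∧ U ≠ Finset.univ ∧ ∀ v ∉ U, ∀ u ∈ U, w v u = 0) →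
          disc D U ≤ ((Q ∩ U).card : ℤ)) :
    Bimatchable w τ Q := by
  classical
  set Sr : Finset V := univ.filter (fun v => ∀ u, ¬ D u v) with hSr
  set Tn : Finset V := univ.filter (fun v => ∀ u, ¬ D v u) with hTn
  have hQSr : Q ⊆ Sr := fun v hv => by
    simp only [hSr, mem_filter, mem_univ, true_and]
    exact Q_subset_src hτ h hQ v hv
  have hpart : ∀ v, v ∉ Sr → v ∈ Tn := by
    intro v hv
    simp only [hSr, mem_filter, mem_univ, true_and] at hv
    simp only [hTn, mem_filter, mem_univ, true_and]
    exact (snk_iff_not_src hτ h v).mpr hv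
  have hdisj : ∀ v, v ∈ Tn → v ∉ Sr := by
    intro v hv
    simp only [hTn, mem_filter, mem_univ, true_and] at hv
    simp only [hSr, mem_filter, mem_univ, true_and]
    exact (snk_iff_not_src hτ h v).mp hv
  have hTS : Tn.card = Sr.card + Q.card := by
    have hd : disc D univ = (Tn.card : ℤ) - (Sr.card : ℤ) := by
      simp only [disc, hTn, hSr]
    rw [hd] at hcard
    omega
  have hw_src : ∀ s t : V, 0 < w s t → s ∈ Sr := by
    intro s t hw
    have hD : D s t := by
      by_contra hD
      rw [h.2.1 s t hD] at hw
      omega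
    by_contra hs
    have hk := hpart s hs
    simp only [hTn, mem_filter, mem_univ, true_and] at hk
    exact hk t hD
  -- Hall's condition setup
  set R : {x // x ∈ Tn} → Finset (V × Fin 2) := (fun t =>
    univ.filter fun p => 0 < w p.1 t.1 ∧ (p.2 = 0 ∨ p.1 ∈ Q)) with hR
  have hall : ∀ A : Finset {x // x ∈ Tn}, A.card ≤ (A.biUnion R).card := by
    intro A
    rcases A.eq_empty_or_nonempty with rfl | hA
    · simp
    set A' : Finset V := A.image Subtype.val with hA'
    set B : Finset V := univ.filter (fun s => ∃ t ∈ A', 0 < w s t) with hB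
    have hA'T : A' ⊆ Tn := by
      intro x hx
      simp only [hA', mem_image] at hx
      obtain ⟨t, _, rfl⟩ := hx
      exact t.2
    have hBS : B ⊆ Sr := by
      intro s hs
      simp only [hB, mem_filter, mem_univ, true_and] at hs
      obtain ⟨t, _, hw⟩ := hs
      exact hw_src s t hw
    have hBiff : ∀ s, s ∈ B ↔ ∃ t ∈ A, 0 < w s t.1 := by
      intro s
      simp only [hB, mem_filter, mem_univ, true_and, hA', mem_image]
      constructor
      · rintro ⟨x, ⟨t, htA, rfl⟩, hw⟩
        exact ⟨t, htA, hw⟩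
      · rintro ⟨t, htA, hw⟩
        exact ⟨t.1, ⟨t, htA, rfl⟩, hw⟩
    have hbiU : A.biUnion R =
        B.image (fun s => (s, (0 : Fin 2))) ∪ (B ∩ Q).image (fun s => (s, (1 : Fin 2))) := by
      ext ⟨s, i⟩
      constructor
      · intro hp
        obtain ⟨t, htA, hpR⟩ := mem_biUnion.mp hp
        simp only [hR, mem_filter, mem_univ, true_and] at hpR
        obtain ⟨hw, hi⟩ := hpR
        have hsB : s ∈ B := (hBiff s).mpr ⟨t, htA, hw⟩
        apply mem_union.mpr
        fin_cases i
        · exact Or.inl (mem_image.mpr ⟨s, hsB, rfl⟩)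
        · have hsQ : s ∈ Q := by
            rcases hi with hi | hi
            · exact absurd hi (by decide)
            · exact hi
          exact Or.inr (mem_image.mpr ⟨s, mem_inter.mpr ⟨hsB, hsQ⟩, rfl⟩)
      · intro hp
        rcases mem_union.mp hp with hp | hp
        · obtain ⟨b, hbB, hbe⟩ := mem_image.mp hp
          injection hbe with h1 h2
          subst h1; subst h2
          obtain ⟨t, htA, hw⟩ := (hBiff b).mp hbB
          refine mem_biUnion.mpr ⟨t, htA, ?_⟩
          simp [hR, hw]
        · obtain ⟨b, hbB, hbe⟩ := mem_image.mp hp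
          injection hbe with h1 h2
          subst h1; subst h2
          obtain ⟨hbB', hbQ⟩ := mem_inter.mp hbB
          obtain ⟨t, htA, hw⟩ := (hBiff b).mp hbB'
          refine mem_biUnion.mpr ⟨t, htA, ?_⟩
          simp [hR, hw, hbQ]
    have hinj0 : Function.Injective (fun s : V => (s, (0 : Fin 2))) := by
      intro a b hab
      exact congrArg Prod.fst hab
    have hinj1 : Function.Injective (fun s : V => (s, (1 : Fin 2))) := by
      intro a b hab
      exact congrArg Prod.fst hab
    have hdisj01 : Disjoint (B.image (fun s => (s, (0 : Fin 2))))
        ((B ∩ Q).image (fun s => (s, (1 : Fin 2)))) := by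
      rw [Finset.disjoint_left]
      intro p hp0 hp1
      obtain ⟨b, _, rfl⟩ := mem_image.mp hp0
      obtain ⟨c, _, hce⟩ := mem_image.mp hp1
      injection hce with h1 h2
      exact absurd h2 (by decide)
    have hcardU : (A.biUnion R).card = B.card + (B ∩ Q).card := by
      rw [hbiU, Finset.card_union_of_disjoint hdisj01,
        Finset.card_image_of_injective _ hinj0, Finset.card_image_of_injective _ hinj1]
    have hcardA : A.card = A'.card := (Finset.card_image_of_injective A Subtype.val_injective).symm
    rw [hcardU, hcardA]
    by_cases hUu : A' ∪ B = univ
    · have hTnA' : Tn ⊆ A' := by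
        intro x hx
        have hxU : x ∈ A' ∪ B := hUu ▸ mem_univ x
        rcases mem_union.mp hxU with h1 | h1
        · exact h1
        · exact absurd (hBS h1) (hdisj x hx)
      have hA'Tn : A' = Tn := Finset.Subset.antisymm hA'T hTnA'
      have hSrB : B = Sr := by
        apply Finset.Subset.antisymm hBS
        intro x hx
        have hxU : x ∈ A' ∪ B := hUu ▸ mem_univ x
        rcases mem_union.mp hxU with h1 | h1
        · exact absurd hx (hdisj x (hA'T h1))
        · exact h1
      have hBQ : B ∩ Q = Q := by
        rw [hSrB]
        exact Finset.inter_eq_right.mpr hQSr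
      rw [hA'Tn, hBQ, hSrB]
      omega
    · have hUne : (A' ∪ B).Nonempty := by
        obtain ⟨t, ht⟩ := hA
        exact ⟨t.1, mem_union_left _ (mem_image_of_mem _ ht)⟩
      have hUsh : ∀ v ∉ A' ∪ B, ∀ u ∈ A' ∪ B, w v u = 0 := by
        intro v hv u hu
        rcases mem_union.mp hu with h1 | h1
        · by_contra hw
          have hw' : 0 < w v u := Nat.pos_of_ne_zero hw
          have hvB : v ∈ B := by
            simp only [hB, mem_filter, mem_univ, true_and]
            exact ⟨u, h1, hw'⟩
          exact hv (mem_union_right _ hvB)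
        · have hBu := hBS h1
          simp only [hSr, mem_filter, mem_univ, true_and] at hBu
          exact h.2.1 v u (hBu v)
      have hdU := hsh (A' ∪ B) ⟨hUne, hUu, hUsh⟩
      have hfT : (A' ∪ B).filter (fun v => ∀ u, ¬ D v u) = A' := by
        ext x
        simp only [mem_filter, mem_union]
        constructor
        · rintro ⟨h1 | h1, hx⟩
          · exact h1
          · exact absurd (hBS h1) (hdisj x (by simp only [hTn, mem_filter, mem_univ, true_and]; exact hx))
        · intro h1
          have hxT := hA'T h1
          simp only [hTn, mem_filter, mem_univ, true_and] at hxT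
          exact ⟨Or.inl h1, hxT⟩
      have hfS : (A' ∪ B).filter (fun v => ∀ u, ¬ D u v) = B := by
        ext x
        simp only [mem_filter, mem_union]
        constructor
        · rintro ⟨h1 | h1, hx⟩
          · exact absurd (by simp only [hSr, mem_filter, mem_univ, true_and]; exact hx) (hdisj x (hA'T h1))
          · exact h1
        · intro h1
          have hxS := hBS h1
          simp only [hSr, mem_filter, mem_univ, true_and] at hxS
          exact ⟨Or.inr h1, hxS⟩
      have hQU : Q ∩ (A' ∪ B) = B ∩ Q := by
        ext x
        simp only [mem_inter, mem_union]
        constructor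
        · rintro ⟨hxQ, h1 | h1⟩
          · exact absurd (hQSr hxQ) (hdisj x (hA'T h1))
          · exact ⟨h1, hxQ⟩
        · rintro ⟨h1, h2⟩
          exact ⟨h2, Or.inr h1⟩
      rw [disc, hfT, hfS, hQU] at hdU
      omega
  obtain ⟨f, hfinj, hfR⟩ := (Finset.all_card_le_biUnion_card_iff_exists_injective R).mp hall
  have hfw : ∀ t : {x // x ∈ Tn}, 0 < w (f t).1 t.1 ∧ ((f t).2 = 0 ∨ (f t).1 ∈ Q) := by
    intro t
    have := hfR t
    simp only [hR, mem_filter, mem_univ, true_and] at this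
    exact this
  set J : V → V → ℕ :=
    (fun u v => if hv : v ∈ Tn then (if (f ⟨v, hv⟩).1 = u then 1 else 0) else 0) with hJdef
  have hJle : ∀ u v, J u v ≤ w u v := by
    intro u v
    simp only [hJdef]
    split
    · rename_i hv
      split
      · rename_i hfv
        have h1 : 0 < w (f ⟨v, hv⟩).1 v := (hfw ⟨v, hv⟩).1
        rw [hfv] at h1
        omega
      · omega
    · omega
  have hJrow : ∀ v, v ∈ Tn → (∑ u, J u v) = 1 := by
    intro v hv
    simp only [hJdef, dif_pos hv]
    simp
  have hJoutSnk : ∀ t ∈ Tn, ∀ u, J t u = 0 := by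
    intro t ht u
    simp only [hJdef]
    split
    · rename_i hu
      split
      · rename_i hf
        exfalso
        have h1 : 0 < w (f ⟨u, hu⟩).1 u := (hfw ⟨u, hu⟩).1
        rw [hf] at h1
        have ht2 : ∀ z, ¬ D t z := by
          simp only [hTn, mem_filter, mem_univ, true_and] at ht
          exact ht
        have h2 : w t u = 0 := h.2.1 t u (ht2 u)
        omega
      · rfl
    · rfl
  have hJinSrc : ∀ v, v ∉ Tn → ∀ u, J u v = 0 := by
    intro v hv u
    simp only [hJdef, dif_neg hv]
  have hd_eq : ∀ s, (∑ u, J s u) = (univ.filter (fun t : {x // x ∈ Tn} => (f t).1 = s)).card := by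
    intro s
    rw [← Finset.sum_subset (Finset.subset_univ Tn)
      (fun u _ hu => by simp only [hJdef, dif_neg hu])]
    rw [← Finset.sum_attach Tn (fun u => J s u)]
    have hc : ∀ t ∈ Tn.attach, J s t.1 = if (f t).1 = s then 1 else 0 := by
      intro t _
      simp only [hJdef, dif_pos t.2]
    rw [Finset.sum_congr rfl hc, Finset.sum_boole, Finset.univ_eq_attach]
    simp
  have hcard2 : ∀ s, (univ.filter (fun t : {x // x ∈ Tn} => (f t).1 = s)).card ≤ 2 := by
    intro s
    have hle : (univ.filter (fun t : {x // x ∈ Tn} => (f t).1 = s)).card ≤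
        (univ : Finset (Fin 2)).card := by
      apply Finset.card_le_card_of_injOn (fun t => (f t).2)
      · intro a _
        exact mem_univ _
      · intro a ha b hb hab
        simp only [coe_filter, mem_univ, true_and, Set.mem_setOf_eq] at ha hb
        apply hfinj
        exact Prod.ext (ha.trans hb.symm) hab
    simpa using hle
  have hcard1 : ∀ s ∉ Q, (univ.filter (fun t : {x // x ∈ Tn} => (f t).1 = s)).card ≤ 1 := by
    intro s hsQ
    apply Finset.card_le_one.mpr
    intro a ha b hb
    simp only [mem_filter, mem_univ, true_and] at ha hb
    have ha2 : (f a).2 = 0 := (hfw a).2.resolve_right (by rw [ha]; exact hsQ)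
    have hb2 : (f b).2 = 0 := (hfw b).2.resolve_right (by rw [hb]; exact hsQ)
    exact hfinj (Prod.ext (ha.trans hb.symm) (ha2.trans hb2.symm))
  have hsumJ : ∑ s ∈ Sr, (∑ u, J s u) = Tn.card := by
    have h1 : ∑ s ∈ Sr, (∑ u, J s u) = ∑ s, ∑ u, J s u := by
      apply Finset.sum_subset (Finset.subset_univ _)
      intro s _ hs
      exact Finset.sum_eq_zero (fun u _ => hJoutSnk s (hpart s hs) u)
    rw [h1, Finset.sum_comm]
    rw [← Finset.sum_subset (Finset.subset_univ Tn)
      (fun u _ hu => Finset.sum_eq_zero (fun s _ => hJinSrc u hu s))]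
    rw [Finset.sum_congr rfl (fun u hu => hJrow u hu)]
    simp
  have hle : ∀ s ∈ Sr, (∑ u, J s u) ≤ (if s ∈ Q then 2 else 1) := by
    intro s _
    rw [hd_eq s]
    split
    · exact hcard2 s
    · exact hcard1 s ‹_›
  have hsum2 : ∑ s ∈ Sr, (if s ∈ Q then (2:ℕ) else 1) = Sr.card + Q.card := by
    rw [sum_ite_Q, Finset.inter_eq_right.mpr hQSr]
  have heq : ∀ s ∈ Sr, (∑ u, J s u) = if s ∈ Q then 2 else 1 :=
    (Finset.sum_eq_sum_iff_of_le hle).mp (by rw [hsumJ, hsum2, hTS])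
  have hJdval : ∀ v, Jdeg J v = if v ∈ Q then 2 else 1 := by
    intro v
    by_cases hv : v ∈ Tn
    · have h1 : Jdeg J v = 1 := by
        rw [Jdeg_split, hJrow v hv, Finset.sum_eq_zero (fun u _ => hJoutSnk v hv u)]
        omega
      have hvQ : v ∉ Q := fun hq => hdisj v hv (hQSr hq)
      rw [h1, if_neg hvQ]
    · have hvS : v ∈ Sr := by
        by_contra hs
        exact hv (hpart v hs)
      rw [Jdeg_split, Finset.sum_eq_zero (fun u _ => hJinSrc v hv u), zero_add]
      exact heq v hvS
  refine ⟨J, ⟨hJle, ?_, ?_⟩, ?_⟩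
  · intro v hv
    have hvQ : v ∉ Q := by
      intro hq
      have := hQ hq
      simp only [activeFinset, mem_filter, mem_univ, true_and] at this
      exact hv this
    rw [hJdval v, if_neg hvQ]
  · intro v _
    rw [hJdval v]
    split
    · exact Or.inr rfl
    · exact Or.inl rfl
  · ext v
    rw [dyadCenters, mem_filter]
    rw [hJdval v]
    by_cases hq : v ∈ Q <;> simp [hq]

/-- Characterization of the bimatchable sets (the bases of `M₀`): `Q ⊆ a(V)` is
bimatchable iff `|Q| = disc(V)` and `|Q ∩ U| ≥ disc(U)` for every dicut shore `U` of
the digraph of positive-weight arcs. -/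
theorem stmt_13 [Nonempty V] (D : V → V → Prop) [DecidableRel D] (w : V → V → ℕ)
    (τ : ℕ) (hτ : 2 ≤ τ) (h : SinkRegularBipartite D w τ)
    (Q : Finset V) (hQ : Q ⊆ activeFinset w τ) :
    Bimatchable w τ Q ↔
      ((Q.card : ℤ) = disc D Finset.univ ∧
        ∀ U : Finset V, (U.Nonempty ∧ U ≠ Finset.univ ∧ ∀ v ∉ U, ∀ u ∈ U, w v u = 0) →
          disc D U ≤ ((Q ∩ U).card : ℤ)) := by
  constructor
  · exact fun hb => forward_dir hτ h hQ hb
  · exact fun ⟨h1, h2⟩ => backward_dir hτ h hQ h1 h2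
end

section
/- Let τ ≥ 2 and let (V, D, w) be a sink-regular weighted (τ,τ+1)-bipartite digraph. Suppose a(V) is partitioned into sets Q and Q' such that: Q is bimatchable and an M₁-basis; and Q' is both the union of τ−1 pairwise disjoint bimatchable sets and the union of τ−1 pairwise disjoint M₁-bases. Then there exists J : V → V → ℕ with J ≤ w pointwise such that ∑_u (J u v + J v u) = 1 + (1 if v ∈ Q, else 0) for every vertex v, ∑_{u ∈ U, v ∉ U} J u v ≥ 1 for every dicut shore U (J is a dijoin), and ∑_{u ∈ U, v ∉ U} (w u v − J u v) ≥ τ − 1 for every dicut shore U (w − J is a (τ−1)-dijoin). -/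
open Finset

variable {V : Type*} [Fintype V] [DecidableEq V]

/-- Counting lemma: for any weight function supported on arcs, the cut weight of a
dicut shore equals the total `Jdeg` over sources in `U` minus that over sinks. -/
lemma cut_count (D : V → V → Prop) [DecidableRel D] (F : V → V → ℕ)
    (hsupp : ∀ u v, ¬ D u v → F u v = 0)
    (hbip : ∀ v : V, (∀ u, ¬ D u v) ∨ (∀ u, ¬ D v u))
    (U : Finset V) (hU : IsDicutShore D U) :
    cutWeight F U + ∑ v ∈ U.filter (fun v => ∀ u, ¬ D v u), Jdeg F v
      = ∑ v ∈ U.filter (fun v => ∀ u, ¬ D u v), Jdeg F v := by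
  have hA : ∑ v ∈ U, ∑ u, F v u
      = ∑ v ∈ U.filter (fun v => ∀ u, ¬ D u v), Jdeg F v := by
    rw [← Finset.sum_filter_add_sum_filter_not U (fun v => ∀ u, ¬ D u v)]
    have h1 : ∑ v ∈ U.filter (fun v => ¬ ∀ u, ¬ D u v), ∑ u, F v u = 0 := by
      apply Finset.sum_eq_zero
      intro v hv
      simp only [Finset.mem_filter] at hv
      have hsink : ∀ u, ¬ D v u := (hbip v).resolve_left hv.2
      exact Finset.sum_eq_zero fun u _ => hsupp v u (hsink u)
    rw [h1, add_zero]
    apply Finset.sum_congr rfl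
    intro v hv
    simp only [Finset.mem_filter] at hv
    unfold Jdeg
    rw [Finset.sum_add_distrib]
    have h2 : ∑ u, F u v = 0 := Finset.sum_eq_zero fun u _ => hsupp u v (hv.2 u)
    omega
  have hB : ∑ v ∈ U, ∑ u, F u v
      = ∑ v ∈ U.filter (fun v => ∀ u, ¬ D v u), Jdeg F v := by
    rw [← Finset.sum_filter_add_sum_filter_not U (fun v => ∀ u, ¬ D v u)]
    have h1 : ∑ v ∈ U.filter (fun v => ¬ ∀ u, ¬ D v u), ∑ u, F u v = 0 := by
      apply Finset.sum_eq_zero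
      intro v hv
      simp only [Finset.mem_filter] at hv
      have hsrc : ∀ u, ¬ D u v := (hbip v).resolve_right hv.2
      exact Finset.sum_eq_zero fun u _ => hsupp u v (hsrc u)
    rw [h1, add_zero]
    apply Finset.sum_congr rfl
    intro v hv
    simp only [Finset.mem_filter] at hv
    unfold Jdeg
    rw [Finset.sum_add_distrib]
    have h2 : ∑ u, F v u = 0 := Finset.sum_eq_zero fun u _ => hsupp v u (hv.2 u)
    omega
  have hAe : ∑ v ∈ U, ∑ u, F v u = (∑ v ∈ U, ∑ u ∈ U, F v u) + cutWeight F U := by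
    unfold cutWeight
    rw [← Finset.sum_add_distrib]
    exact Finset.sum_congr rfl fun v _ => (Finset.sum_add_sum_compl U _).symm
  have hBe : ∑ v ∈ U, ∑ u, F u v = ∑ v ∈ U, ∑ u ∈ U, F u v := by
    apply Finset.sum_congr rfl
    intro v hv
    rw [← Finset.sum_add_sum_compl U (fun u => F u v)]
    have h2 : ∑ u ∈ Uᶜ, F u v = 0 :=
      Finset.sum_eq_zero fun u hu => hsupp u v (hU.2.2 u (Finset.mem_compl.mp hu) v hv)
    omega
  have hI : (∑ v ∈ U, ∑ u ∈ U, F u v) = ∑ v ∈ U, ∑ u ∈ U, F v u := Finset.sum_comm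
  omega

/-- Packing a dijoin and a `(τ−1)`-dijoin in a sink-regular weighted
`(τ,τ+1)`-bipartite digraph, given a partition of the active vertices into an
admissible set `Q` and a `(τ−1)`-admissible set `Q'`. -/
theorem stmt_15 [Nonempty V] (D : V → V → Prop) [DecidableRel D] (w : V → V → ℕ)
    (τ : ℕ) (hτ : 2 ≤ τ) (h : SinkRegularBipartite D w τ)
    (Q Q' : Finset V) (hdisjQ : Disjoint Q Q') (hpart : Q ∪ Q' = activeFinset w τ)
    (hQbm : Bimatchable w τ Q) (hQm1 : IsM1Basis D w τ Q)
    (hQ'bm : ∃ R : Fin (τ - 1) → Finset V,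
      (∀ i j, i ≠ j → Disjoint (R i) (R j)) ∧
      (∀ i, Bimatchable w τ (R i)) ∧ (∀ v : V, v ∈ Q' ↔ ∃ i, v ∈ R i))
    (hQ'm1 : ∃ S : Fin (τ - 1) → Finset V,
      (∀ i j, i ≠ j → Disjoint (S i) (S j)) ∧
      (∀ i, IsM1Basis D w τ (S i)) ∧ (∀ v : V, v ∈ Q' ↔ ∃ i, v ∈ S i)) :
    ∃ J : V → V → ℕ, (∀ u v, J u v ≤ w u v) ∧
      (∀ v : V, ∑ u, (J u v + J v u) = 1 + (if v ∈ Q then 1 else 0)) ∧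
      (∀ U : Finset V, IsDicutShore D U → 1 ≤ cutWeight J U) ∧
      (∀ U : Finset V, IsDicutShore D U →
        τ - 1 ≤ ∑ u ∈ U, ∑ v ∈ Uᶜ, (w u v - J u v)) := by
  obtain ⟨hirr, hsupp, hbip, hsrcdeg, hsinkdeg, hcut⟩ := h
  obtain ⟨J, ⟨hle, hJ1, hJ2⟩, hdc⟩ := hQbm
  have hQa : Q ⊆ activeFinset w τ := hQm1.1
  have haiff : ∀ v : V, v ∈ activeFinset w τ ↔ wdeg w v = τ + 1 := by
    intro v; simp [activeFinset]
  have hdeg : ∀ v : V, Jdeg J v = 1 + (if v ∈ Q then 1 else 0) := by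
    intro v
    by_cases hv : v ∈ Q
    · simp only [hv, if_true]
      have h2 : v ∈ dyadCenters J := hdc ▸ hv
      simp only [dyadCenters, Finset.mem_filter] at h2
      omega
    · simp only [hv, if_false]
      have hnd : Jdeg J v ≠ 2 := by
        intro h2
        apply hv
        rw [← hdc]
        simp [dyadCenters, h2]
      by_cases ha : wdeg w v = τ + 1
      · rcases hJ2 v ha with h | h <;> omega
      · have := hJ1 v ha; omega
  have hJsupp : ∀ u v, ¬ D u v → J u v = 0 := by
    intro u v hD
    have := hle u v
    have := hsupp u v hD
    omega
  have hQsrc : ∀ v ∈ activeFinset w τ, ∀ u, ¬ D u v := by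
    intro v hv
    rw [haiff] at hv
    rcases hbip v with h | h
    · exact h
    · exfalso; have := hsinkdeg v h; omega
  -- main cut estimates
  have main : ∀ U : Finset V, IsDicutShore D U →
      1 ≤ cutWeight J U ∧ τ - 1 ≤ ∑ u ∈ U, ∑ v ∈ Uᶜ, (w u v - J u v) := by
    intro U hU
    have hJcount := cut_count D J hJsupp hbip U hU
    have hwcount := cut_count D w hsupp hbip U hU
    have hJw : ∀ v : V, Jdeg w v = wdeg w v := fun _ => rfl
    simp only [hJw] at hwcount
    -- evaluate the sink sums
    have hsinknotQ : ∀ v ∈ U.filter (fun v => ∀ u, ¬ D v u), v ∉ Q := by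
      intro v hv hvQ
      have h1 := (haiff v).mp (hQa hvQ)
      have h2 := hsinkdeg v (Finset.mem_filter.mp hv).2
      omega
    have hsJ : ∑ v ∈ U.filter (fun v => ∀ u, ¬ D v u), Jdeg J v
        = (U.filter (fun v => ∀ u, ¬ D v u)).card := by
      rw [Finset.sum_congr rfl (fun v hv => by rw [hdeg v, if_neg (hsinknotQ v hv)])]
      simp
    have hrQ : (U.filter (fun v => ∀ u, ¬ D u v)) ∩ Q = Q ∩ U := by
      ext v
      simp only [Finset.mem_inter, Finset.mem_filter]
      constructor
      · rintro ⟨⟨hvU, _⟩, hvQ⟩; exact ⟨hvQ, hvU⟩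
      · rintro ⟨hvQ, hvU⟩; exact ⟨⟨hvU, hQsrc v (hQa hvQ)⟩, hvQ⟩
    have hrJ : ∑ v ∈ U.filter (fun v => ∀ u, ¬ D u v), Jdeg J v
        = (U.filter (fun v => ∀ u, ¬ D u v)).card + (Q ∩ U).card := by
      rw [Finset.sum_congr rfl (fun v _ => hdeg v), Finset.sum_add_distrib]
      congr 1
      · simp
      · rw [Finset.sum_ite_mem, ← hrQ]
        simp
    have hsw : ∑ v ∈ U.filter (fun v => ∀ u, ¬ D v u), wdeg w v
        = τ * (U.filter (fun v => ∀ u, ¬ D v u)).card := by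
      rw [Finset.sum_congr rfl (fun v hv => hsinkdeg v (Finset.mem_filter.mp hv).2)]
      simp [mul_comm]
    have hrA : (U.filter (fun v => ∀ u, ¬ D u v)) ∩ activeFinset w τ
        = activeFinset w τ ∩ U := by
      ext v
      simp only [Finset.mem_inter, Finset.mem_filter]
      constructor
      · rintro ⟨⟨hvU, _⟩, hva⟩; exact ⟨hva, hvU⟩
      · rintro ⟨hva, hvU⟩; exact ⟨⟨hvU, hQsrc v hva⟩, hva⟩
    have hAcard : (activeFinset w τ ∩ U).card = (Q ∩ U).card + (Q' ∩ U).card := by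
      rw [← hpart, Finset.union_inter_distrib_right]
      exact Finset.card_union_of_disjoint
        (Finset.disjoint_of_subset_left Finset.inter_subset_left
          (Finset.disjoint_of_subset_right Finset.inter_subset_left hdisjQ))
    have hrw : ∑ v ∈ U.filter (fun v => ∀ u, ¬ D u v), wdeg w v
        = τ * (U.filter (fun v => ∀ u, ¬ D u v)).card
          + ((Q ∩ U).card + (Q' ∩ U).card) := by
      have hterm : ∀ v ∈ U.filter (fun v => ∀ u, ¬ D u v),
          wdeg w v = τ + (if v ∈ activeFinset w τ then 1 else 0) := by
        intro v hv
        rcases hsrcdeg v (Finset.mem_filter.mp hv).2 with h | h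
        · rw [h, if_neg (by rw [haiff]; omega)]
          omega
        · rw [h, if_pos ((haiff v).mpr h)]
      rw [Finset.sum_congr rfl hterm, Finset.sum_add_distrib]
      congr 1
      · simp [mul_comm]
      · rw [Finset.sum_ite_mem, ← hAcard, ← hrA]
        simp
    rw [hsJ, hrJ] at hJcount
    rw [hsw, hrw] at hwcount
    -- discrepancy
    have hdiscU : disc D U = ((U.filter (fun v => ∀ u, ¬ D v u)).card : ℤ)
        - ((U.filter (fun v => ∀ u, ¬ D u v)).card : ℤ) := rfl
    have hQbound := hQm1.2.2 U hU
    rw [hdiscU] at hQbound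
    -- Q' bound
    obtain ⟨S, hSdisj, hSm1, hSmem⟩ := hQ'm1
    have hbi : Q' ∩ U = Finset.univ.biUnion (fun i => S i ∩ U) := by
      ext v
      simp only [Finset.mem_inter, Finset.mem_biUnion, Finset.mem_univ, true_and]
      constructor
      · rintro ⟨hvQ', hvU⟩
        obtain ⟨i, hi⟩ := (hSmem v).mp hvQ'
        exact ⟨i, hi, hvU⟩
      · rintro ⟨i, hi, hvU⟩
        exact ⟨(hSmem v).mpr ⟨i, hi⟩, hvU⟩
    have hcard : (Q' ∩ U).card = ∑ i, (S i ∩ U).card := by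
      rw [hbi, Finset.card_biUnion]
      intro i _ j _ hij
      exact Finset.disjoint_of_subset_left Finset.inter_subset_left
        (Finset.disjoint_of_subset_right Finset.inter_subset_left (hSdisj i j hij))
    have hQ'bound : ((τ : ℤ) - 1) *
        (1 + (((U.filter (fun v => ∀ u, ¬ D v u)).card : ℤ)
          - ((U.filter (fun v => ∀ u, ¬ D u v)).card : ℤ)))
        ≤ ((Q' ∩ U).card : ℤ) := by
      have h1 : ∀ i : Fin (τ - 1),
          1 + (((U.filter (fun v => ∀ u, ¬ D v u)).card : ℤ)
            - ((U.filter (fun v => ∀ u, ¬ D u v)).card : ℤ))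
          ≤ ((S i ∩ U).card : ℤ) := by
        intro i
        have := (hSm1 i).2.2 U hU
        rwa [hdiscU] at this
      calc ((τ : ℤ) - 1) *
            (1 + (((U.filter (fun v => ∀ u, ¬ D v u)).card : ℤ)
              - ((U.filter (fun v => ∀ u, ¬ D u v)).card : ℤ)))
          = ∑ _i : Fin (τ - 1),
              (1 + (((U.filter (fun v => ∀ u, ¬ D v u)).card : ℤ)
                - ((U.filter (fun v => ∀ u, ¬ D u v)).card : ℤ))) := by
            rw [Finset.sum_const, Finset.card_univ, Fintype.card_fin, nsmul_eq_mul]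
            congr 1
            push_cast [Nat.cast_sub (show 1 ≤ τ by omega)]
            ring
        _ ≤ ∑ i, ((S i ∩ U).card : ℤ) := Finset.sum_le_sum fun i _ => h1 i
        _ = ((Q' ∩ U).card : ℤ) := by rw [hcard]; push_cast; ring
    constructor
    · omega
    · -- τ - 1 ≤ ∑∑ (w - J)
      have hsub : (∑ u ∈ U, ∑ v ∈ Uᶜ, (w u v - J u v)) + cutWeight J U
          = cutWeight w U := by
        unfold cutWeight
        rw [← Finset.sum_add_distrib]
        apply Finset.sum_congr rfl
        intro u _
        rw [← Finset.sum_add_distrib]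
        exact Finset.sum_congr rfl fun v _ => Nat.sub_add_cancel (hle u v)
      have hJz : (cutWeight J U : ℤ)
          + ((U.filter (fun v => ∀ u, ¬ D v u)).card : ℤ)
          = ((U.filter (fun v => ∀ u, ¬ D u v)).card : ℤ) + ((Q ∩ U).card : ℤ) := by
        exact_mod_cast hJcount
      have hwz : (cutWeight w U : ℤ)
          + (τ : ℤ) * ((U.filter (fun v => ∀ u, ¬ D v u)).card : ℤ)
          = (τ : ℤ) * ((U.filter (fun v => ∀ u, ¬ D u v)).card : ℤ)
            + (((Q ∩ U).card : ℤ) + ((Q' ∩ U).card : ℤ)) := by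
        exact_mod_cast hwcount
      have hsubz : ((∑ u ∈ U, ∑ v ∈ Uᶜ, (w u v - J u v) : ℕ) : ℤ)
          + (cutWeight J U : ℤ) = (cutWeight w U : ℤ) := by
        exact_mod_cast hsub
      have hz : (τ : ℤ) - 1 ≤ ((∑ u ∈ U, ∑ v ∈ Uᶜ, (w u v - J u v) : ℕ) : ℤ) := by
        nlinarith [hJz, hwz, hsubz, hQ'bound]
      omega
  refine ⟨J, hle, fun v => hdeg v, fun U hU => (main U hU).1, fun U hU => (main U hU).2⟩
end
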